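/- arXiv:2004.12106 — 13 statements merged into one kernel-verified Lean document; each statement's English description precedes it below -/
import Mathlib

section
/- Let n = 2m be even and let v_1,…,v_n ∈ ℝ³ be the edge vectors of a generic closed n-gon (so v_1+⋯+v_n = 0 and Δ_i ≠ 0 for all i). Then the polygon is regular (i.e. a support system exists) if and only if Δ_1·Δ_3·…·Δ_{2m−1} = Δ_2·Δ_4·…·Δ_{2m}. -/
/-!
A support vector `u i` is orthogonal to `v i` and `v (i + 1)`, whose cross product is nonzero by
genericity, so `u i = c i • (v i ⨯₃ v (i + 1))`. Since
`(v i ⨯₃ v (i + 1)) ⨯₃ (v (i + 1) ⨯₃ v (i + 2)) = Δ i • v (i + 1)`, support systems correspond to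
scalars with `c i * c (i + 1) * Δ i = 1`. Replacing `c i` by its inverse at odd `i` (consistent
around the cycle because `n` is even) turns this into the telescoping condition
`b (i + 1) / b i = Δ i ^ (±1)`, solvable on a cycle iff the alternating product of the `Δ i` is `1`.
-/

open Matrix

theorem smul_cross_smul {R : Type*} [CommRing R] (s t : R) (a b : Fin 3 → R) :
    (s • a) ⨯₃ (t • b) = (s * t) • (a ⨯₃ b) := by
  rw [LinearMap.map_smul₂, map_smul, smul_smul]

theorem cross_cross_cross_eq_dot_cross_smul {R : Type*} [CommRing R] (a b c : Fin 3 → R) :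
    (a ⨯₃ b) ⨯₃ (b ⨯₃ c) = (a ⬝ᵥ b ⨯₃ c) • b := by
  rw [cross_cross_eq_smul_sub_smul', dot_cross_self, zero_smul, sub_zero, dotProduct_comm,
    triple_product_permutation]

theorem exists_eq_smul_cross_of_dotProduct_eq_zero {K : Type*} [Field K] [LinearOrder K]
    [IsStrictOrderedRing K] {x a b : Fin 3 → K} (hab : a ⨯₃ b ≠ 0) (ha : x ⬝ᵥ a = 0)
    (hb : x ⬝ᵥ b = 0) : ∃ t : K, x = t • (a ⨯₃ b) := by
  set w := a ⨯₃ b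
  have hxw : x ⨯₃ w = 0 := by
    rw [cross_cross_eq_smul_sub_smul', hb, dotProduct_comm, ha, zero_smul, zero_smul, sub_zero]
  have hww : w ⬝ᵥ w ≠ 0 := dotProduct_self_eq_zero.not.mpr hab
  have hsmul : (w ⬝ᵥ w) • x = (x ⬝ᵥ w) • w := by
    rw [← sub_eq_zero, ← cross_cross_eq_smul_sub_smul', hxw, map_zero]
  exact ⟨(x ⬝ᵥ w) / (w ⬝ᵥ w), by rw [div_eq_inv_mul, mul_smul, ← hsmul, inv_smul_smul₀ hww]⟩

def IsSupportSystem {R : Type*} [CommRing R] {n : ℕ} [NeZero n] (v u : Fin n → Fin 3 → R) :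
    Prop :=
  ∀ i, u i ⨯₃ u (i + 1) = v (i + 1)

theorem exists_isSupportSystem_iff {K : Type*} [Field K] [LinearOrder K] [IsStrictOrderedRing K]
    {n : ℕ} [NeZero n] {v : Fin n → Fin 3 → K}
    (hgen : ∀ i, v i ⬝ᵥ v (i + 1) ⨯₃ v (i + 2) ≠ 0) :
    (∃ u, IsSupportSystem v u) ↔
      ∃ c : Fin n → K, ∀ i, c i * c (i + 1) * (v i ⬝ᵥ v (i + 1) ⨯₃ v (i + 2)) = 1 := by
  have hv (i : Fin n) : v (i + 1) ≠ 0 := fun h => hgen i (by simp [h])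
  have hw (i : Fin n) : v i ⨯₃ v (i + 1) ≠ 0 := fun h => hgen i <| by
    rw [← triple_product_permutation, h, dotProduct_zero]
  have hww (i : Fin n) :
      (v i ⨯₃ v (i + 1)) ⨯₃ (v (i + 1) ⨯₃ v (i + 1 + 1)) =
        (v i ⬝ᵥ v (i + 1) ⨯₃ v (i + 2)) • v (i + 1) := by
    have : i + 1 + 1 = i + 2 := by open Fin.CommRing in ring
    rw [cross_cross_cross_eq_dot_cross_smul, this]
  constructor
  · rintro ⟨u, hu⟩
    have hu_perp (i : Fin n) : u i ⬝ᵥ v i = 0 := by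
      rw [← sub_add_cancel i 1, ← hu (i - 1), dot_cross_self]
    have hu_perp_succ (i : Fin n) : u i ⬝ᵥ v (i + 1) = 0 := by
      rw [← hu i, dot_self_cross]
    choose c hc using fun i =>
      exists_eq_smul_cross_of_dotProduct_eq_zero (hw i) (hu_perp i) (hu_perp_succ i)
    refine ⟨c, fun i => ?_⟩
    have h := hu i
    rw [hc i, hc (i + 1), smul_cross_smul, hww, smul_smul] at h
    exact (smul_left_injective K (hv i)).eq_iff.mp (h.trans (one_smul K _).symm)
  · rintro ⟨c, hc⟩
    refine ⟨fun i => c i • (v i ⨯₃ v (i + 1)), fun i => ?_⟩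
    rw [smul_cross_smul, hww, smul_smul, hc, one_smul]

theorem Fin.val_add_one_mod_two {n : ℕ} [NeZero n] (hn : Even n) (i : Fin n) :
    (i + 1).val % 2 = (i.val + 1) % 2 := by
  have h1 : (1 : Fin n).val % 2 = 1 % 2 := by
    rw [Fin.val_one', Nat.mod_mod_of_dvd _ (even_iff_two_dvd.mp hn)]
  rw [Fin.val_add, Nat.mod_mod_of_dvd _ (even_iff_two_dvd.mp hn), Nat.add_mod, h1,
    ← Nat.add_mod]

theorem Fin.partialProd_last {M : Type*} [CommMonoid M] {n : ℕ} (f : Fin n → M) :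
    Fin.partialProd f (Fin.last n) = ∏ i, f i := by
  rw [Fin.partialProd, Fin.val_last, List.take_of_length_le (List.length_ofFn).le,
    List.prod_ofFn]

theorem exists_div_eq_iff_prod_eq_one {G : Type*} [CommGroup G] {n : ℕ} [NeZero n]
    (e : Fin n → G) : (∃ b : Fin n → G, ∀ i, b (i + 1) / b i = e i) ↔ ∏ i, e i = 1 := by
  constructor
  · rintro ⟨b, hb⟩
    rw [← Finset.prod_congr rfl fun i _ => hb i, Finset.prod_div_distrib, div_eq_one]
    exact Equiv.prod_comp (Equiv.addRight 1) b
  · intro he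
    obtain ⟨k, rfl⟩ := Nat.exists_eq_succ_of_ne_zero (NeZero.ne n)
    refine ⟨fun i => Fin.partialProd e i.castSucc, fun i => ?_⟩
    rcases Fin.eq_castSucc_or_eq_last i with ⟨j, rfl⟩ | rfl
    · dsimp only
      rw [Fin.coeSucc_eq_succ, ← Fin.succ_castSucc, Fin.partialProd_succ, mul_div_cancel_left]
    · have hlast : Fin.partialProd e (Fin.last k).castSucc * e (Fin.last k) = 1 := by
        rw [← Fin.partialProd_succ, Fin.succ_last, Fin.partialProd_last, he]
      dsimp only
      rw [Fin.last_add_one, Fin.castSucc_zero, Fin.partialProd_zero, one_div,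
        inv_eq_iff_mul_eq_one, hlast]

section Alternate

variable {G : Type*} [CommGroup G] {n : ℕ}

def alternate (i : Fin n) (x : G) : G := if i.val % 2 = 0 then x else x⁻¹

theorem alternate_involutive (i : Fin n) : Function.Involutive (alternate (G := G) i) := by
  intro x
  unfold alternate
  split_ifs <;> simp

theorem alternate_add_one_div_alternate [NeZero n] (hn : Even n) (i : Fin n) (x y : G) :
    alternate (i + 1) y / alternate i x = alternate i (x * y)⁻¹ := by
  have := Fin.val_add_one_mod_two hn i
  unfold alternate
  split_ifs <;> first | omega | simp [div_eq_mul_inv, mul_comm]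

theorem prod_alternate (x : Fin n → G) :
    ∏ i, alternate i (x i) =
      (∏ i ∈ Finset.univ.filter (fun i : Fin n => i.val % 2 = 0), x i) /
        ∏ i ∈ Finset.univ.filter (fun i : Fin n => i.val % 2 = 1), x i := by
  simp only [alternate, Finset.prod_ite, Finset.prod_inv_distrib, div_eq_mul_inv]
  congr 3
  exact Finset.filter_congr fun i _ => Nat.mod_two_ne_zero

theorem exists_mul_mul_eq_one_iff [NeZero n] (hn : Even n) (d : Fin n → G) :
    (∃ c : Fin n → G, ∀ i, c i * c (i + 1) * d i = 1) ↔
      ∏ i ∈ Finset.univ.filter (fun i : Fin n => i.val % 2 = 0), d i =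
        ∏ i ∈ Finset.univ.filter (fun i : Fin n => i.val % 2 = 1), d i := by
  have hsubst (c : Fin n → G) (i : Fin n) :
      alternate (i + 1) (c (i + 1)) / alternate i (c i) = alternate i (d i) ↔
        c i * c (i + 1) * d i = 1 := by
    rw [alternate_add_one_div_alternate hn, (alternate_involutive i).injective.eq_iff,
      inv_eq_iff_mul_eq_one]
  rw [← div_eq_one, ← prod_alternate, ← exists_div_eq_iff_prod_eq_one]
  constructor
  · rintro ⟨c, hc⟩
    exact ⟨fun i => alternate i (c i), fun i => (hsubst c i).mpr (hc i)⟩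
  · rintro ⟨b, hb⟩
    refine ⟨fun i => alternate i (b i), fun i => (hsubst (fun i => alternate i (b i)) i).mp ?_⟩
    simpa only [alternate_involutive _ _] using hb i

end Alternate

theorem exists_mul_mul_eq_one_iff₀ {G₀ : Type*} [CommGroupWithZero G₀] {n : ℕ} [NeZero n]
    (hn : Even n) (d : Fin n → G₀) (hd : ∀ i, d i ≠ 0) :
    (∃ c : Fin n → G₀, ∀ i, c i * c (i + 1) * d i = 1) ↔
      ∏ i ∈ Finset.univ.filter (fun i : Fin n => i.val % 2 = 0), d i =
        ∏ i ∈ Finset.univ.filter (fun i : Fin n => i.val % 2 = 1), d i := by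
  lift d to Fin n → G₀ˣ using fun i => (hd i).isUnit
  rw [← Units.coe_prod, ← Units.coe_prod, Units.val_inj, ← exists_mul_mul_eq_one_iff hn]
  constructor
  · rintro ⟨c, hc⟩
    have hc0 (i : Fin n) : c i ≠ 0 := left_ne_zero_of_mul (left_ne_zero_of_mul_eq_one (hc i))
    exact ⟨fun i => Units.mk0 (c i) (hc0 i), fun i => Units.ext (by simpa using hc i)⟩
  · rintro ⟨c, hc⟩
    exact ⟨fun i => c i, fun i => by simpa using congrArg Units.val (hc i)⟩

/-- `v i` (0-based) is the paper's `v_{i+1}`, so the paper's `Δ_1·Δ_3·…·Δ_{2m-1}` is the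
product over the 0-based indices `i` with `i % 2 = 0`. -/
theorem even_polygon_regular_iff_general (n : ℕ) (hn : Even n) [NeZero n]
    (v : Fin n → Fin 3 → ℝ)
    (Δ : Fin n → ℝ)
    (hΔ : ∀ i, Δ i = v i ⬝ᵥ (v (i + 1) ⨯₃ v (i + 2)))
    (hgen : ∀ i, Δ i ≠ 0) :
    (∃ u : Fin n → Fin 3 → ℝ, ∀ i, u i ⨯₃ u (i + 1) = v (i + 1)) ↔
      ∏ i ∈ Finset.univ.filter (fun i : Fin n => i.val % 2 = 0), Δ i =
        ∏ i ∈ Finset.univ.filter (fun i : Fin n => i.val % 2 = 1), Δ i := by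
  obtain rfl : Δ = fun i => v i ⬝ᵥ v (i + 1) ⨯₃ v (i + 2) := funext hΔ
  exact (exists_isSupportSystem_iff hgen).trans (exists_mul_mul_eq_one_iff₀ hn _ hgen)

/-- Let `n = 2m` be even and `v 0, …, v (n-1)` the edge vectors of a
generic closed `n`-gon (they sum to zero and all determinants `Δ i = ⟨v i, [v (i+1), v (i+2)]⟩`
are nonzero, indices mod `n`).  Then a support system exists iff the product of the
determinants with odd (1-based) index equals the product of those with even (1-based) index.
Here `v i` (0-based) is the paper's `v_{i+1}`, so the paper's `Δ_1·Δ_3·…·Δ_{2m-1}` is the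
product over 0-based indices `i` with `i % 2 = 0`, and `Δ_2·Δ_4·…·Δ_{2m}` is the product
over `i % 2 = 1`. -/
theorem even_polygon_regular_iff (n : ℕ) (hn : Even n) [NeZero n]
    (v : Fin n → Fin 3 → ℝ)
    (hclosed : ∑ i, v i = 0)
    (Δ : Fin n → ℝ)
    (hΔ : ∀ i, Δ i = v i ⬝ᵥ (v (i + 1) ⨯₃ v (i + 2)))
    (hgen : ∀ i, Δ i ≠ 0) :
    (∃ u : Fin n → Fin 3 → ℝ, ∀ i, u i ⨯₃ u (i + 1) = v (i + 1)) ↔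
      ∏ i ∈ Finset.univ.filter (fun i : Fin n => i.val % 2 = 0), Δ i =
        ∏ i ∈ Finset.univ.filter (fun i : Fin n => i.val % 2 = 1), Δ i :=
  even_polygon_regular_iff_general n hn v Δ hΔ hgen
end

section
/- Let n be odd and let v_1,…,v_n ∈ ℝ³ be the edge vectors of a generic closed n-gon with Δ_1·Δ_2·…·Δ_n < 0 (so the polygon is not regular). Let r : ℝ³ → ℝ³ be the mirror reflection r(x,y,z) = (x,y,−z). Then the mirror-symmetric polygon with edge vectors r(v_1),…,r(v_n) is a generic closed n-gon that is regular. -/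
/-!
The reflection reverses orientation, so it changes the sign of every determinant, and for odd `n`
the product of the reflected determinants is positive. The ansatz `u i = t i • (w i ⨯₃ w (i + 1))`
turns the support equations into `t i * t (i + 1) = (Δ' i)⁻¹`, because
`(a ⨯₃ b) ⨯₃ (b ⨯₃ c) = (a ⬝ᵥ b ⨯₃ c) • b`. Solving `t k * t (k + 1) = c k` forward from `t 0 = x`
gives `t n = g / x` for odd `n`, where `g` is the value of `t n` for `x = 1`. Telescoping shows
`g * (∏ k < n, t k) ^ 2 = ∏ k < n, c k`, so when that product is positive, `x = √g` closes the cycle.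
-/

open Finset Function

def cycleSeq {K : Type*} [DivisionRing K] (c : ℕ → K) (x : K) : ℕ → K
  | 0 => x
  | k + 1 => c k / cycleSeq c x k

section cycleSeq

variable {K : Type*} [Field K] {c : ℕ → K} {x : K}

@[simp] lemma cycleSeq_zero : cycleSeq c x 0 = x := rfl

@[simp] lemma cycleSeq_succ (k : ℕ) : cycleSeq c x (k + 1) = c k / cycleSeq c x k := rfl

lemma cycleSeq_eq_mul_zpow (c : ℕ → K) (x : K) (k : ℕ) :
    cycleSeq c x k = cycleSeq c 1 k * x ^ ((-1) ^ k : ℤ) := by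
  induction k with
  | zero => simp
  | succ k ih =>
    rw [cycleSeq_succ, cycleSeq_succ, ih, pow_succ, mul_neg_one, zpow_neg, div_mul_eq_div_div,
      div_eq_mul_inv _ (x ^ _)]

lemma cycleSeq_ne_zero (hc : ∀ k, c k ≠ 0) (hx : x ≠ 0) (k : ℕ) : cycleSeq c x k ≠ 0 := by
  induction k with
  | zero => exact hx
  | succ k ih => exact div_ne_zero (hc k) ih

lemma cycleSeq_mul_succ (hc : ∀ k, c k ≠ 0) (hx : x ≠ 0) (k : ℕ) :
    cycleSeq c x k * cycleSeq c x (k + 1) = c k :=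
  mul_div_cancel₀ _ (cycleSeq_ne_zero hc hx k)

lemma cycleSeq_mul_prod_sq (hc : ∀ k, c k ≠ 0) (hx : x ≠ 0) (n : ℕ) :
    cycleSeq c x n * (∏ k ∈ range n, cycleSeq c x k) ^ 2 = x * ∏ k ∈ range n, c k := by
  induction n with
  | zero => simp
  | succ n ih =>
    rw [prod_range_succ, prod_range_succ, ← mul_assoc x, ← ih, ← cycleSeq_mul_succ hc hx n]
    ring

lemma cycleSeq_periodic {n : ℕ} (hcn : Periodic c n) (hx : cycleSeq c x n = x) :
    Periodic (cycleSeq c x) n := by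
  intro k
  induction k with
  | zero => simpa using hx
  | succ k ih => rw [Nat.add_right_comm, cycleSeq_succ, cycleSeq_succ, hcn, ih]

end cycleSeq

lemma exists_cycleSeq_eq_self_of_odd {c : ℕ → ℝ} {n : ℕ} (hn : Odd n) (hc : ∀ k, c k ≠ 0)
    (hpos : 0 < ∏ k ∈ range n, c k) : ∃ x ≠ 0, cycleSeq c x n = x := by
  have hg : 0 < cycleSeq c 1 n := by
    rw [← one_mul (∏ k ∈ range n, c k), ← cycleSeq_mul_prod_sq hc one_ne_zero n] at hpos
    exact pos_of_mul_pos_left hpos (sq_nonneg _)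
  refine ⟨√(cycleSeq c 1 n), (Real.sqrt_pos.2 hg).ne', ?_⟩
  rw [cycleSeq_eq_mul_zpow, hn.neg_one_pow, zpow_neg_one, ← div_eq_mul_inv, Real.div_sqrt]

open Matrix

open Fin.NatCast in
theorem Fin.exists_mul_add_one_eq_of_odd {n : ℕ} (hn : Odd n) [NeZero n] (c : Fin n → ℝ)
    (hc : ∀ i, c i ≠ 0) (hpos : 0 < ∏ i, c i) : ∃ t : Fin n → ℝ, ∀ i, t i * t (i + 1) = c i := by
  set c' : ℕ → ℝ := fun k => c k -- the periodic extension of `c`, as `(k : Fin n) = k % n`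
  have hc'n : Periodic c' n := fun k => by simp [c']
  have hc' : ∀ k, c' k ≠ 0 := fun k => hc k
  have hpos' : 0 < ∏ k ∈ range n, c' k := by
    simpa [c', ← Fin.prod_univ_eq_prod_range] using hpos
  obtain ⟨x, hx0, hx⟩ := exists_cycleSeq_eq_self_of_odd hn hc' hpos'
  refine ⟨fun i => cycleSeq c' x i, fun i => ?_⟩
  dsimp only
  rw [Fin.val_add, Fin.val_one', Nat.add_mod_mod, (cycleSeq_periodic hc'n hx).map_mod_nat,
    cycleSeq_mul_succ hc' hx0]
  simp [c']

theorem cross_cross_cross_eq_smul {R : Type*} [CommRing R] (u v w : Fin 3 → R) :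
    u ⨯₃ v ⨯₃ (v ⨯₃ w) = (u ⬝ᵥ v ⨯₃ w) • v := by
  rw [cross_cross_eq_smul_sub_smul, dot_self_cross, zero_smul, sub_zero]

theorem exists_support_of_odd_of_prod_pos {n : ℕ} (hn : Odd n) [NeZero n]
    (w : Fin n → Fin 3 → ℝ) (hgen : ∀ i, w i ⬝ᵥ (w (i + 1) ⨯₃ w (i + 2)) ≠ 0)
    (hpos : 0 < ∏ i, w i ⬝ᵥ (w (i + 1) ⨯₃ w (i + 2))) :
    ∃ u : Fin n → Fin 3 → ℝ, ∀ i, u i ⨯₃ u (i + 1) = w (i + 1) := by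
  obtain ⟨t, ht⟩ := Fin.exists_mul_add_one_eq_of_odd hn
    (fun i => (w i ⬝ᵥ (w (i + 1) ⨯₃ w (i + 2)))⁻¹) (fun i => inv_ne_zero (hgen i))
    (by simpa [prod_inv_distrib] using hpos)
  refine ⟨fun i => t i • (w i ⨯₃ w (i + 1)), fun i => ?_⟩
  simp only [map_smul, LinearMap.smul_apply, smul_smul]
  rw [show i + 1 + 1 = i + 2 by grind, cross_cross_cross_eq_smul, smul_smul,
    mul_comm (t (i + 1)), ht, inv_mul_cancel₀ (hgen i), one_smul]

theorem mulVec_dotProduct_cross {R : Type*} [CommRing R] (A : Matrix (Fin 3) (Fin 3) R)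
    (u v w : Fin 3 → R) : (A *ᵥ u) ⬝ᵥ (A *ᵥ v) ⨯₃ (A *ᵥ w) = A.det * (u ⬝ᵥ v ⨯₃ w) := by
  have hrows : (![A *ᵥ u, A *ᵥ v, A *ᵥ w] : Matrix (Fin 3) (Fin 3) R) = of ![u, v, w] * Aᵀ := by
    funext i
    fin_cases i <;> simp [mul_apply_eq_vecMul, vecMul_transpose] <;> rfl
  rw [triple_product_eq_det, triple_product_eq_det, hrows, det_mul, det_transpose, mul_comm]
  rfl

/-- Let `n` be odd and `v` the edge vectors of a generic closed `n`-gon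
with `Δ_1·…·Δ_n < 0` (so the polygon is not regular).  Let `r` be the mirror reflection
`r (x, y, z) = (x, y, -z)`.  Then the mirror-symmetric polygon with edge vectors
`r (v i)` is a generic closed `n`-gon that is regular. -/
theorem odd_polygon_mirror_regular (n : ℕ) (hn : Odd n) [NeZero n]
    (v : Fin n → Fin 3 → ℝ)
    (hclosed : ∑ i, v i = 0)
    (Δ : Fin n → ℝ)
    (hΔ : ∀ i, Δ i = v i ⬝ᵥ (v (i + 1) ⨯₃ v (i + 2)))
    (hgen : ∀ i, Δ i ≠ 0)
    (hneg : ∏ i, Δ i < 0)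
    (r : (Fin 3 → ℝ) → Fin 3 → ℝ)
    (hr : ∀ x : Fin 3 → ℝ, r x = ![x 0, x 1, -x 2]) :
    (∑ i, r (v i) = 0) ∧
      (∀ i : Fin n, r (v i) ⬝ᵥ (r (v (i + 1)) ⨯₃ r (v (i + 2))) ≠ 0) ∧
      (∃ u : Fin n → Fin 3 → ℝ, ∀ i, u i ⨯₃ u (i + 1) = r (v (i + 1))) := by
  set M : Matrix (Fin 3) (Fin 3) ℝ := diagonal ![1, 1, -1]
  have hrM : ∀ x, r x = M *ᵥ x := fun x => by
    funext i
    fin_cases i <;> simp [hr, M, mulVec_diagonal]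
  have hdet : M.det = -1 := by simp [M, Fin.prod_univ_three]
  have hmirror : ∀ i, M *ᵥ v i ⬝ᵥ (M *ᵥ v (i + 1)) ⨯₃ (M *ᵥ v (i + 2)) = -Δ i := fun i => by
    rw [mulVec_dotProduct_cross, hdet, hΔ, neg_one_mul]
  have hgen' : ∀ i, M *ᵥ v i ⬝ᵥ (M *ᵥ v (i + 1)) ⨯₃ (M *ᵥ v (i + 2)) ≠ 0 := fun i => by
    rw [hmirror, neg_ne_zero]
    exact hgen i
  have hpos : 0 < ∏ i, M *ᵥ v i ⬝ᵥ (M *ᵥ v (i + 1)) ⨯₃ (M *ᵥ v (i + 2)) := by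
    rw [prod_congr rfl fun i _ => hmirror i, prod_neg, card_univ, Fintype.card_fin,
      hn.neg_one_pow]
    linarith
  simp only [hrM]
  exact ⟨by rw [← mulVec_sum, hclosed, mulVec_zero], hgen',
    exists_support_of_odd_of_prod_pos hn (fun i => M *ᵥ v i) hgen' hpos⟩
end

section
/- Every generic closed quadrangle is regular: if v_1, v_2, v_3, v_4 ∈ ℝ³ satisfy v_1+v_2+v_3+v_4 = 0 and Δ_i ≠ 0 for i = 1,…,4, then there exist u_1, u_2, u_3, u_4 ∈ ℝ³ with [u_1,u_2] = v_2, [u_2,u_3] = v_3, [u_3,u_4] = v_4 and [u_4,u_1] = v_1. -/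
/-!
The candidate support vectors are the edge normals `vᵢ × vᵢ₊₁`, suitably rescaled: the identity
`(a × b) × (b × c) = ⟨a, [b, c]⟩ b` shows that consecutive normals have cross product `Δᵢ vᵢ₊₁`.
Closing the quadrangle forces `Δ₂ = -Δ₁`, `Δ₃ = Δ₁`, `Δ₄ = -Δ₁`, so dividing the second and
fourth normals by `Δ₁` and fixing signs produces a support system.
-/

open Matrix

section CrossProduct

variable {R : Type*} [CommRing R]

theorem cross_cross_cross_eq_triple_product_smul (a b c : Fin 3 → R) :
    (a ⨯₃ b) ⨯₃ (b ⨯₃ c) = (a ⬝ᵥ (b ⨯₃ c)) • b := by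
  rw [cross_cross_eq_smul_sub_smul', dot_cross_self, zero_smul, sub_zero, dotProduct_comm,
    triple_product_permutation]

theorem triple_product_eq_neg_of_add_eq_zero {a b c d : Fin 3 → R}
    (h : a + b + c + d = 0) : b ⬝ᵥ (c ⨯₃ d) = -(a ⬝ᵥ (b ⨯₃ c)) := by
  have hd : d = -a - b - c := by rw [← sub_eq_zero, ← h]; abel
  rw [hd, map_sub, map_sub, map_neg, cross_self, sub_zero, dotProduct_sub, dotProduct_neg,
    dot_cross_self, sub_zero, triple_product_permutation a]

end CrossProduct

theorem quadrangle_regular_general (v₁ v₂ v₃ v₄ : Fin 3 → ℝ)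
    (hclosed : v₁ + v₂ + v₃ + v₄ = 0)
    (hΔ₁ : v₁ ⬝ᵥ (v₂ ⨯₃ v₃) ≠ 0) :
    ∃ u₁ u₂ u₃ u₄ : Fin 3 → ℝ,
      u₁ ⨯₃ u₂ = v₂ ∧ u₂ ⨯₃ u₃ = v₃ ∧ u₃ ⨯₃ u₄ = v₄ ∧ u₄ ⨯₃ u₁ = v₁ := by
  generalize hΔ : v₁ ⬝ᵥ (v₂ ⨯₃ v₃) = Δ at hΔ₁
  have hΔ₂ : v₂ ⬝ᵥ (v₃ ⨯₃ v₄) = -Δ := by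
    rw [triple_product_eq_neg_of_add_eq_zero hclosed, hΔ]
  have hΔ₃ : v₃ ⬝ᵥ (v₄ ⨯₃ v₁) = Δ := by
    rw [triple_product_eq_neg_of_add_eq_zero (a := v₂) (by rw [← hclosed]; abel), hΔ₂, neg_neg]
  have hΔ₄ : v₄ ⬝ᵥ (v₁ ⨯₃ v₂) = -Δ := by
    rw [triple_product_eq_neg_of_add_eq_zero (a := v₃) (by rw [← hclosed]; abel), hΔ₃]
  refine ⟨v₁ ⨯₃ v₂, Δ⁻¹ • v₂ ⨯₃ v₃, -(v₃ ⨯₃ v₄), -Δ⁻¹ • v₄ ⨯₃ v₁, ?_, ?_, ?_, ?_⟩ <;>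
    simp only [map_smul, map_neg, LinearMap.smul_apply, LinearMap.neg_apply, smul_neg, neg_smul,
      neg_neg, cross_cross_cross_eq_triple_product_smul, hΔ, hΔ₂, hΔ₃, hΔ₄, smul_smul,
      inv_mul_cancel₀ hΔ₁, one_smul]

/-- Every generic closed quadrangle is regular: if `v₁+v₂+v₃+v₄ = 0` and
all four determinants are nonzero, then there is a support system `u₁, u₂, u₃, u₄`. -/
theorem quadrangle_regular (v₁ v₂ v₃ v₄ : Fin 3 → ℝ)
    (hclosed : v₁ + v₂ + v₃ + v₄ = 0)
    (hΔ₁ : v₁ ⬝ᵥ (v₂ ⨯₃ v₃) ≠ 0)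
    (hΔ₂ : v₂ ⬝ᵥ (v₃ ⨯₃ v₄) ≠ 0)
    (hΔ₃ : v₃ ⬝ᵥ (v₄ ⨯₃ v₁) ≠ 0)
    (hΔ₄ : v₄ ⬝ᵥ (v₁ ⨯₃ v₂) ≠ 0) :
    ∃ u₁ u₂ u₃ u₄ : Fin 3 → ℝ,
      u₁ ⨯₃ u₂ = v₂ ∧ u₂ ⨯₃ u₃ = v₃ ∧ u₃ ⨯₃ u₄ = v₄ ∧ u₄ ⨯₃ u₁ = v₁ :=
  quadrangle_regular_general v₁ v₂ v₃ v₄ hclosed hΔ₁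
end

section
/- Let v_1, v_2, v_3, v_4 ∈ ℝ³ be the edge vectors of a generic closed quadrangle (v_1+v_2+v_3+v_4 = 0, all Δ_i ≠ 0), and let u_1, u_2, u_3, u_4 be any support system for it. Then ⟨u_2 − u_1, [u_3 − u_1, u_4 − u_1]⟩ = 0; that is, the four endpoints of the support vectors (the vertices of the derived polygon) lie in a common plane. -/
open Matrix

/-! The support conditions turn closedness of the quadrangle into
`u₁ ⨯₃ u₂ + u₂ ⨯₃ u₃ + u₃ ⨯₃ u₄ + u₄ ⨯₃ u₁ = 0`. This sum differs from `(u₃ - u₁) ⨯₃ (u₄ - u₁)`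
by `(u₂ - u₁) ⨯₃ (u₃ - u₂)`, which is orthogonal to `u₂ - u₁`, so the triple product of the
derived quadrangle's edges from `u₁` vanishes. -/

theorem cross_sub_sub_eq_sum_cross_sub {R : Type*} [CommRing R] (u₁ u₂ u₃ u₄ : Fin 3 → R) :
    (u₃ - u₁) ⨯₃ (u₄ - u₁) =
      u₁ ⨯₃ u₂ + u₂ ⨯₃ u₃ + u₃ ⨯₃ u₄ + u₄ ⨯₃ u₁ - (u₂ - u₁) ⨯₃ (u₃ - u₂) := by
  simp only [map_sub, LinearMap.sub_apply, cross_self]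
  rw [← cross_anticomm u₄ u₁, ← cross_anticomm u₁ u₃]
  abel

theorem sub_dotProduct_cross_sub_sub {R : Type*} [CommRing R] (u₁ u₂ u₃ u₄ : Fin 3 → R) :
    (u₂ - u₁) ⬝ᵥ ((u₃ - u₁) ⨯₃ (u₄ - u₁)) =
      (u₂ - u₁) ⬝ᵥ (u₁ ⨯₃ u₂ + u₂ ⨯₃ u₃ + u₃ ⨯₃ u₄ + u₄ ⨯₃ u₁) := by
  rw [cross_sub_sub_eq_sum_cross_sub, dotProduct_sub, dot_self_cross, sub_zero]

theorem derived_quadrangle_planar_general (v₁ v₂ v₃ v₄ : Fin 3 → ℝ)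
    (hclosed : v₁ + v₂ + v₃ + v₄ = 0)
    (u₁ u₂ u₃ u₄ : Fin 3 → ℝ)
    (h₁₂ : u₁ ⨯₃ u₂ = v₂) (h₂₃ : u₂ ⨯₃ u₃ = v₃)
    (h₃₄ : u₃ ⨯₃ u₄ = v₄) (h₄₁ : u₄ ⨯₃ u₁ = v₁) :
    (u₂ - u₁) ⬝ᵥ ((u₃ - u₁) ⨯₃ (u₄ - u₁)) = 0 := by
  have hsum : v₂ + v₃ + v₄ + v₁ = 0 := by rw [← hclosed]; abel
  rw [sub_dotProduct_cross_sub_sub, h₁₂, h₂₃, h₃₄, h₄₁, hsum, dotProduct_zero]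

/-- For a generic closed quadrangle with edge vectors `v₁, …, v₄` and any
support system `u₁, …, u₄`, we have `⟨u₂ - u₁, [u₃ - u₁, u₄ - u₁]⟩ = 0`: the endpoints of
the support vectors (the vertices of the derived polygon) lie in a common plane. -/
theorem derived_quadrangle_planar (v₁ v₂ v₃ v₄ : Fin 3 → ℝ)
    (hclosed : v₁ + v₂ + v₃ + v₄ = 0)
    (hΔ₁ : v₁ ⬝ᵥ (v₂ ⨯₃ v₃) ≠ 0)
    (hΔ₂ : v₂ ⬝ᵥ (v₃ ⨯₃ v₄) ≠ 0)
    (hΔ₃ : v₃ ⬝ᵥ (v₄ ⨯₃ v₁) ≠ 0)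
    (hΔ₄ : v₄ ⬝ᵥ (v₁ ⨯₃ v₂) ≠ 0)
    (u₁ u₂ u₃ u₄ : Fin 3 → ℝ)
    (h₁₂ : u₁ ⨯₃ u₂ = v₂) (h₂₃ : u₂ ⨯₃ u₃ = v₃)
    (h₃₄ : u₃ ⨯₃ u₄ = v₄) (h₄₁ : u₄ ⨯₃ u₁ = v₁) :
    (u₂ - u₁) ⬝ᵥ ((u₃ - u₁) ⨯₃ (u₄ - u₁)) = 0 :=
  derived_quadrangle_planar_general v₁ v₂ v₃ v₄ hclosed u₁ u₂ u₃ u₄ h₁₂ h₂₃ h₃₄ h₄₁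
end

section
/- Let u_1, u_2, u_3, u_4 ∈ ℝ³ be a support system for a closed quadrangle with edge vectors v_1, v_2, v_3, v_4. Then [u_2 − u_1, u_3 − u_1] + [u_3 − u_1, u_4 − u_1] = 0; that is, the vector-valued oriented area of the derived quadrangle with vertices u_1, u_2, u_3, u_4 is zero (so the derived quadrangle is self-intersecting). -/
open Matrix Finset

/-! Triangulating a polygon from its first vertex gives the shoelace formula: the vector area of
the derived polygon is `½ ∑ [u_i, u_{i+1}]`. For a support system the terms `[u_i, u_{i+1}]` are
exactly the edge vectors `v_{i+1}`, whose sum vanishes because the original polygon is closed. -/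

theorem sum_range_cross_sub_cross_sub {R : Type*} [CommRing R] (u : ℕ → Fin 3 → R) (m : ℕ) :
    ∑ k ∈ range m, (u (k + 1) - u 0) ⨯₃ (u (k + 2) - u 0) =
      ∑ k ∈ range (m + 1), u k ⨯₃ u (k + 1) + u (m + 1) ⨯₃ u 0 := by
  induction m with
  | zero => simp
  | succ m ih =>
    rw [sum_range_succ, ih, sum_range_succ (n := m + 1)]
    simp only [map_sub, LinearMap.sub_apply, cross_self, sub_zero]
    rw [← cross_anticomm (u (m + 1 + 1)) (u 0)]
    abel

/-- For any support system `u₁, …, u₄` of a closed quadrangle with edge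
vectors `v₁, …, v₄`, one has `[u₂ - u₁, u₃ - u₁] + [u₃ - u₁, u₄ - u₁] = 0`: the
vector-valued oriented area of the derived quadrangle is zero (so it is
self-intersecting). -/
theorem derived_quadrangle_zero_area (v₁ v₂ v₃ v₄ : Fin 3 → ℝ)
    (hclosed : v₁ + v₂ + v₃ + v₄ = 0)
    (u₁ u₂ u₃ u₄ : Fin 3 → ℝ)
    (h₁₂ : u₁ ⨯₃ u₂ = v₂) (h₂₃ : u₂ ⨯₃ u₃ = v₃)
    (h₃₄ : u₃ ⨯₃ u₄ = v₄) (h₄₁ : u₄ ⨯₃ u₁ = v₁) :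
    (u₂ - u₁) ⨯₃ (u₃ - u₁) + (u₃ - u₁) ⨯₃ (u₄ - u₁) = 0 := by
  have shoelace : (u₂ - u₁) ⨯₃ (u₃ - u₁) + (u₃ - u₁) ⨯₃ (u₄ - u₁) =
      u₁ ⨯₃ u₂ + u₂ ⨯₃ u₃ + u₃ ⨯₃ u₄ + u₄ ⨯₃ u₁ := by
    have h := sum_range_cross_sub_cross_sub (fun k ↦ ![u₁, u₂, u₃, u₄] (Fin.ofNat 4 k)) 2
    simpa only [sum_range_succ, sum_range_zero, zero_add, Fin.ofNat, Nat.reduceAdd, Nat.reduceMod,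
      Fin.reduceFinMk, Matrix.cons_val] using h
  rw [shoelace, h₁₂, h₂₃, h₃₄, h₄₁, ← hclosed]
  abel
end

section
/- Let v_1,…,v_5 ∈ ℝ³ be the edge vectors of a generic closed pentagon (v_1+⋯+v_5 = 0, all Δ_i ≠ 0) which is regular, and let u_1,…,u_5 be a support system. Then ⟨u_2 − u_1, [u_3 − u_1, u_4 − u_1]⟩ = 0 and ⟨u_3 − u_1, [u_4 − u_1, u_5 − u_1]⟩ = 0; that is, the five vertices u_1,…,u_5 of the derived pentagon lie in a common plane. -/
/-!
For a support system the edge vectors are `vᵢ₊₁ = uᵢ ⨯₃ uᵢ₊₁`, so closedness of the pentagon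
says exactly that `Σ uᵢ ⨯₃ uᵢ₊₁`, twice the vector area of the derived pentagon, vanishes.
The volume spanned by four of its vertices is a chord of the derived pentagon dotted with this
vector area (cut the pentagon into a quadrilateral and a triangle whose area vector is
orthogonal to the chord), so it vanishes too.
-/

open Matrix

def pentagonCrossSum (u₁ u₂ u₃ u₄ u₅ : Fin 3 → ℝ) : Fin 3 → ℝ :=
  u₁ ⨯₃ u₂ + u₂ ⨯₃ u₃ + u₃ ⨯₃ u₄ + u₄ ⨯₃ u₅ + u₅ ⨯₃ u₁

section

variable (u₁ u₂ u₃ u₄ u₅ : Fin 3 → ℝ)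

theorem volume₁₂₃₄_eq_dotProduct_pentagonCrossSum :
    (u₂ - u₁) ⬝ᵥ ((u₃ - u₁) ⨯₃ (u₄ - u₁)) =
      (u₄ - u₁) ⬝ᵥ pentagonCrossSum u₁ u₂ u₃ u₄ u₅ := by
  simp only [pentagonCrossSum, dotProduct, Fin.sum_univ_three, cross_apply, Pi.sub_apply,
    Pi.add_apply, Fin.isValue, cons_val_zero, cons_val_one, cons_val]
  ring

theorem volume₁₃₄₅_eq_dotProduct_pentagonCrossSum :
    (u₃ - u₁) ⬝ᵥ ((u₄ - u₁) ⨯₃ (u₅ - u₁)) =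
      (u₃ - u₁) ⬝ᵥ pentagonCrossSum u₁ u₂ u₃ u₄ u₅ := by
  simp only [pentagonCrossSum, dotProduct, Fin.sum_univ_three, cross_apply, Pi.sub_apply,
    Pi.add_apply, Fin.isValue, cons_val_zero, cons_val_one, cons_val]
  ring

end

theorem derived_pentagon_planar_general (v₁ v₂ v₃ v₄ v₅ : Fin 3 → ℝ)
    (hclosed : v₁ + v₂ + v₃ + v₄ + v₅ = 0)
    (u₁ u₂ u₃ u₄ u₅ : Fin 3 → ℝ)
    (h₁₂ : u₁ ⨯₃ u₂ = v₂) (h₂₃ : u₂ ⨯₃ u₃ = v₃) (h₃₄ : u₃ ⨯₃ u₄ = v₄)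
    (h₄₅ : u₄ ⨯₃ u₅ = v₅) (h₅₁ : u₅ ⨯₃ u₁ = v₁) :
    (u₂ - u₁) ⬝ᵥ ((u₃ - u₁) ⨯₃ (u₄ - u₁)) = 0 ∧
      (u₃ - u₁) ⬝ᵥ ((u₄ - u₁) ⨯₃ (u₅ - u₁)) = 0 := by
  have hsum : pentagonCrossSum u₁ u₂ u₃ u₄ u₅ = 0 := by
    rw [pentagonCrossSum, h₁₂, h₂₃, h₃₄, h₄₅, h₅₁, ← hclosed]
    abel
  simp only [volume₁₂₃₄_eq_dotProduct_pentagonCrossSum u₁ u₂ u₃ u₄ u₅,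
    volume₁₃₄₅_eq_dotProduct_pentagonCrossSum u₁ u₂ u₃ u₄ u₅, hsum, dotProduct_zero, and_self]

/-- For a generic regular closed pentagon with edge vectors `v₁, …, v₅`
and support system `u₁, …, u₅`, both `⟨u₂ - u₁, [u₃ - u₁, u₄ - u₁]⟩ = 0` and
`⟨u₃ - u₁, [u₄ - u₁, u₅ - u₁]⟩ = 0`: the five vertices of the derived pentagon lie in a
common plane. -/
theorem derived_pentagon_planar (v₁ v₂ v₃ v₄ v₅ : Fin 3 → ℝ)
    (hclosed : v₁ + v₂ + v₃ + v₄ + v₅ = 0)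
    (hΔ₁ : v₁ ⬝ᵥ (v₂ ⨯₃ v₃) ≠ 0)
    (hΔ₂ : v₂ ⬝ᵥ (v₃ ⨯₃ v₄) ≠ 0)
    (hΔ₃ : v₃ ⬝ᵥ (v₄ ⨯₃ v₅) ≠ 0)
    (hΔ₄ : v₄ ⬝ᵥ (v₅ ⨯₃ v₁) ≠ 0)
    (hΔ₅ : v₅ ⬝ᵥ (v₁ ⨯₃ v₂) ≠ 0)
    (u₁ u₂ u₃ u₄ u₅ : Fin 3 → ℝ)
    (h₁₂ : u₁ ⨯₃ u₂ = v₂) (h₂₃ : u₂ ⨯₃ u₃ = v₃) (h₃₄ : u₃ ⨯₃ u₄ = v₄)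
    (h₄₅ : u₄ ⨯₃ u₅ = v₅) (h₅₁ : u₅ ⨯₃ u₁ = v₁) :
    (u₂ - u₁) ⬝ᵥ ((u₃ - u₁) ⨯₃ (u₄ - u₁)) = 0 ∧
      (u₃ - u₁) ⬝ᵥ ((u₄ - u₁) ⨯₃ (u₅ - u₁)) = 0 :=
  derived_pentagon_planar_general v₁ v₂ v₃ v₄ v₅ hclosed u₁ u₂ u₃ u₄ u₅ h₁₂ h₂₃ h₃₄ h₄₅ h₅₁
end

section
/- Let u_1,…,u_5 ∈ ℝ³ be a support system for a closed pentagon with edge vectors v_1,…,v_5. Then [u_2 − u_1, u_3 − u_1] + [u_3 − u_1, u_4 − u_1] + [u_4 − u_1, u_5 − u_1] = 0; that is, the vector-valued oriented area of the derived pentagon with vertices u_1,…,u_5 is zero. -/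
open Matrix

/-! Fanning out from `u₁`, the oriented area of the derived pentagon is half the shoelace sum
`∑ [uᵢ, uᵢ₊₁]`, and the support relations turn that sum into `v₁ + ⋯ + v₅ = 0`. -/

theorem sub_cross_sub {R : Type*} [CommRing R] (a b c : Fin 3 → R) :
    (b - a) ⨯₃ (c - a) = a ⨯₃ b + b ⨯₃ c + c ⨯₃ a := by
  simp only [map_sub, LinearMap.sub_apply, cross_self, ← cross_anticomm a c, ← cross_anticomm a b]
  abel

theorem pentagon_fan_cross_eq_shoelace {R : Type*} [CommRing R] (u₁ u₂ u₃ u₄ u₅ : Fin 3 → R) :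
    (u₂ - u₁) ⨯₃ (u₃ - u₁) + (u₃ - u₁) ⨯₃ (u₄ - u₁) + (u₄ - u₁) ⨯₃ (u₅ - u₁) =
      u₁ ⨯₃ u₂ + u₂ ⨯₃ u₃ + u₃ ⨯₃ u₄ + u₄ ⨯₃ u₅ + u₅ ⨯₃ u₁ := by
  rw [sub_cross_sub, sub_cross_sub, sub_cross_sub, ← cross_anticomm u₁ u₃, ← cross_anticomm u₁ u₄]
  abel

/-- For any support system `u₁, …, u₅` of a closed pentagon with edge
vectors `v₁, …, v₅`, one has
`[u₂ - u₁, u₃ - u₁] + [u₃ - u₁, u₄ - u₁] + [u₄ - u₁, u₅ - u₁] = 0`: the vector-valued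
oriented area of the derived pentagon is zero. -/
theorem derived_pentagon_zero_area (v₁ v₂ v₃ v₄ v₅ : Fin 3 → ℝ)
    (hclosed : v₁ + v₂ + v₃ + v₄ + v₅ = 0)
    (u₁ u₂ u₃ u₄ u₅ : Fin 3 → ℝ)
    (h₁₂ : u₁ ⨯₃ u₂ = v₂) (h₂₃ : u₂ ⨯₃ u₃ = v₃) (h₃₄ : u₃ ⨯₃ u₄ = v₄)
    (h₄₅ : u₄ ⨯₃ u₅ = v₅) (h₅₁ : u₅ ⨯₃ u₁ = v₁) :
    (u₂ - u₁) ⨯₃ (u₃ - u₁) + (u₃ - u₁) ⨯₃ (u₄ - u₁) + (u₄ - u₁) ⨯₃ (u₅ - u₁) = 0 := by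
  rw [pentagon_fan_cross_eq_shoelace, h₁₂, h₂₃, h₃₄, h₄₅, h₅₁, ← hclosed]
  abel
end

section
/- Let v_1,…,v_6 ∈ ℝ³ be the edge vectors of a generic closed hexagon (v_1+⋯+v_6 = 0, all Δ_i ≠ 0) that is regular, and let u_1,…,u_6 be any support system. Let w_i = u_{i+1} − u_i (indices mod 6, so w_6 = u_1 − u_6) be the edge vectors of the derived hexagon, and let Δ'_i = ⟨w_i, [w_{i+1}, w_{i+2}]⟩ (indices mod 6). Then Δ'_1 = Δ'_4, Δ'_2 = Δ'_5 and Δ'_3 = Δ'_6; that is, every derivative of a regular hexagon is strongly-regular. -/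
/-!
Up to a factor 6, `Δ'₁` and `Δ'₄` are the signed volumes of the tetrahedra `u₁u₂u₃u₄` and
`u₄u₅u₆u₁`, which share the edge `u₁u₄`. Expanding by multilinearity, their difference is
`⟨u₄ - u₁, Σ [uᵢ, uᵢ₊₁]⟩`, and this cyclic sum is `v₁ + ⋯ + v₆ = 0`.
-/

open Matrix

theorem sub_dotProduct_cross_sub_sub_eq {R : Type*} [CommRing R] (a b c d e f : Fin 3 → R) :
    (b - a) ⬝ᵥ ((c - b) ⨯₃ (d - c)) - (e - d) ⬝ᵥ ((f - e) ⨯₃ (a - f)) =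
      (d - a) ⬝ᵥ (a ⨯₃ b + b ⨯₃ c + c ⨯₃ d + d ⨯₃ e + e ⨯₃ f + f ⨯₃ a) := by
  simp only [dotProduct, Fin.sum_univ_three, cross_apply, Pi.sub_apply, Pi.add_apply,
    cons_val_zero, cons_val_one, cons_val_two, head_cons, tail_cons]
  ring

theorem sub_dotProduct_cross_eq_of_cross_sum_eq_zero {R : Type*} [CommRing R]
    {a b c d e f : Fin 3 → R}
    (h : a ⨯₃ b + b ⨯₃ c + c ⨯₃ d + d ⨯₃ e + e ⨯₃ f + f ⨯₃ a = 0) :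
    (b - a) ⬝ᵥ ((c - b) ⨯₃ (d - c)) = (e - d) ⬝ᵥ ((f - e) ⨯₃ (a - f)) := by
  rw [← sub_eq_zero, sub_dotProduct_cross_sub_sub_eq, h, dotProduct_zero]

theorem derived_hexagon_strongly_regular_general (v₁ v₂ v₃ v₄ v₅ v₆ : Fin 3 → ℝ)
    (hclosed : v₁ + v₂ + v₃ + v₄ + v₅ + v₆ = 0)
    (u₁ u₂ u₃ u₄ u₅ u₆ : Fin 3 → ℝ)
    (h₁₂ : u₁ ⨯₃ u₂ = v₂) (h₂₃ : u₂ ⨯₃ u₃ = v₃) (h₃₄ : u₃ ⨯₃ u₄ = v₄)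
    (h₄₅ : u₄ ⨯₃ u₅ = v₅) (h₅₆ : u₅ ⨯₃ u₆ = v₆) (h₆₁ : u₆ ⨯₃ u₁ = v₁)
    (w₁ w₂ w₃ w₄ w₅ w₆ : Fin 3 → ℝ)
    (hw₁ : w₁ = u₂ - u₁) (hw₂ : w₂ = u₃ - u₂) (hw₃ : w₃ = u₄ - u₃)
    (hw₄ : w₄ = u₅ - u₄) (hw₅ : w₅ = u₆ - u₅) (hw₆ : w₆ = u₁ - u₆)
    (Δ'₁ Δ'₂ Δ'₃ Δ'₄ Δ'₅ Δ'₆ : ℝ)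
    (hΔ'₁ : Δ'₁ = w₁ ⬝ᵥ (w₂ ⨯₃ w₃))
    (hΔ'₂ : Δ'₂ = w₂ ⬝ᵥ (w₃ ⨯₃ w₄))
    (hΔ'₃ : Δ'₃ = w₃ ⬝ᵥ (w₄ ⨯₃ w₅))
    (hΔ'₄ : Δ'₄ = w₄ ⬝ᵥ (w₅ ⨯₃ w₆))
    (hΔ'₅ : Δ'₅ = w₅ ⬝ᵥ (w₆ ⨯₃ w₁))
    (hΔ'₆ : Δ'₆ = w₆ ⬝ᵥ (w₁ ⨯₃ w₂)) :
    Δ'₁ = Δ'₄ ∧ Δ'₂ = Δ'₅ ∧ Δ'₃ = Δ'₆ := by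
  have hsum₁ : u₁ ⨯₃ u₂ + u₂ ⨯₃ u₃ + u₃ ⨯₃ u₄ + u₄ ⨯₃ u₅ + u₅ ⨯₃ u₆ + u₆ ⨯₃ u₁ = 0 := by
    rw [h₁₂, h₂₃, h₃₄, h₄₅, h₅₆, h₆₁, ← hclosed]
    abel
  have hsum₂ : u₂ ⨯₃ u₃ + u₃ ⨯₃ u₄ + u₄ ⨯₃ u₅ + u₅ ⨯₃ u₆ + u₆ ⨯₃ u₁ + u₁ ⨯₃ u₂ = 0 := by
    rw [← hsum₁]
    abel
  have hsum₃ : u₃ ⨯₃ u₄ + u₄ ⨯₃ u₅ + u₅ ⨯₃ u₆ + u₆ ⨯₃ u₁ + u₁ ⨯₃ u₂ + u₂ ⨯₃ u₃ = 0 := by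
    rw [← hsum₁]
    abel
  subst hw₁ hw₂ hw₃ hw₄ hw₅ hw₆ hΔ'₁ hΔ'₂ hΔ'₃ hΔ'₄ hΔ'₅ hΔ'₆
  exact ⟨sub_dotProduct_cross_eq_of_cross_sum_eq_zero hsum₁,
    sub_dotProduct_cross_eq_of_cross_sum_eq_zero hsum₂,
    sub_dotProduct_cross_eq_of_cross_sum_eq_zero hsum₃⟩

/-- Let `v₁, …, v₆` be the edge vectors of a generic closed hexagon that
is regular, with support system `u₁, …, u₆`.  Let `wᵢ = u_{i+1} - uᵢ` (indices mod 6) be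
the edge vectors of the derived hexagon and `Δ'ᵢ = ⟨wᵢ, [w_{i+1}, w_{i+2}]⟩`.  Then
`Δ'₁ = Δ'₄`, `Δ'₂ = Δ'₅` and `Δ'₃ = Δ'₆`: every derivative of a regular hexagon is
strongly-regular. -/
theorem derived_hexagon_strongly_regular (v₁ v₂ v₃ v₄ v₅ v₆ : Fin 3 → ℝ)
    (hclosed : v₁ + v₂ + v₃ + v₄ + v₅ + v₆ = 0)
    (hΔ₁ : v₁ ⬝ᵥ (v₂ ⨯₃ v₃) ≠ 0)
    (hΔ₂ : v₂ ⬝ᵥ (v₃ ⨯₃ v₄) ≠ 0)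
    (hΔ₃ : v₃ ⬝ᵥ (v₄ ⨯₃ v₅) ≠ 0)
    (hΔ₄ : v₄ ⬝ᵥ (v₅ ⨯₃ v₆) ≠ 0)
    (hΔ₅ : v₅ ⬝ᵥ (v₆ ⨯₃ v₁) ≠ 0)
    (hΔ₆ : v₆ ⬝ᵥ (v₁ ⨯₃ v₂) ≠ 0)
    (u₁ u₂ u₃ u₄ u₅ u₆ : Fin 3 → ℝ)
    (h₁₂ : u₁ ⨯₃ u₂ = v₂) (h₂₃ : u₂ ⨯₃ u₃ = v₃) (h₃₄ : u₃ ⨯₃ u₄ = v₄)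
    (h₄₅ : u₄ ⨯₃ u₅ = v₅) (h₅₆ : u₅ ⨯₃ u₆ = v₆) (h₆₁ : u₆ ⨯₃ u₁ = v₁)
    (w₁ w₂ w₃ w₄ w₅ w₆ : Fin 3 → ℝ)
    (hw₁ : w₁ = u₂ - u₁) (hw₂ : w₂ = u₃ - u₂) (hw₃ : w₃ = u₄ - u₃)
    (hw₄ : w₄ = u₅ - u₄) (hw₅ : w₅ = u₆ - u₅) (hw₆ : w₆ = u₁ - u₆)
    (Δ'₁ Δ'₂ Δ'₃ Δ'₄ Δ'₅ Δ'₆ : ℝ)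
    (hΔ'₁ : Δ'₁ = w₁ ⬝ᵥ (w₂ ⨯₃ w₃))
    (hΔ'₂ : Δ'₂ = w₂ ⬝ᵥ (w₃ ⨯₃ w₄))
    (hΔ'₃ : Δ'₃ = w₃ ⬝ᵥ (w₄ ⨯₃ w₅))
    (hΔ'₄ : Δ'₄ = w₄ ⬝ᵥ (w₅ ⨯₃ w₆))
    (hΔ'₅ : Δ'₅ = w₅ ⬝ᵥ (w₆ ⨯₃ w₁))
    (hΔ'₆ : Δ'₆ = w₆ ⬝ᵥ (w₁ ⨯₃ w₂)) :
    Δ'₁ = Δ'₄ ∧ Δ'₂ = Δ'₅ ∧ Δ'₃ = Δ'₆ :=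
  derived_hexagon_strongly_regular_general v₁ v₂ v₃ v₄ v₅ v₆ hclosed u₁ u₂ u₃ u₄ u₅ u₆ h₁₂ h₂₃ h₃₄
    h₄₅ h₅₆ h₆₁ w₁ w₂ w₃ w₄ w₅ w₆ hw₁ hw₂ hw₃ hw₄ hw₅ hw₆ Δ'₁ Δ'₂ Δ'₃ Δ'₄ Δ'₅ Δ'₆ hΔ'₁ hΔ'₂ hΔ'₃
    hΔ'₄ hΔ'₅ hΔ'₆
end

section
/- Let v_1,…,v_6 ∈ ℝ³ be the edge vectors of a generic closed hexagon and let u_1,…,u_6 be a support system. For each nonzero real α, define the support system u'_i(α) by u'_i(α) = α·u_i for even i and u'_i(α) = u_i/α for odd i, let w_i(α) = u'_{i+1}(α) − u'_i(α) (indices mod 6), and Δ'_i(α) = ⟨w_i(α), [w_{i+1}(α), w_{i+2}(α)]⟩. Then for all nonzero α, β: Δ'_1(α)·Δ'_2(β) = Δ'_2(α)·Δ'_1(β) and Δ'_2(α)·Δ'_3(β) = Δ'_3(α)·Δ'_2(β); that is, the type Δ'_1 : Δ'_2 : Δ'_3 of the derived hexagon is the same for all derivatives of the regular hexagon. -/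
/-!
Writing `[a, b, c]` for the triple product, expanding by trilinearity shows
`Δ'₁(α) = α P₁ - α⁻¹ Q₁` and `Δ'₂(α) = α⁻¹ P₂ - α Q₂` (and `Δ'₃` like `Δ'₁`) with
`Pᵢ = ⟨u_{i+3}, [uᵢ, u_{i+1}] + [u_{i+1}, u_{i+2}]⟩`, `Qᵢ = ⟨uᵢ, [u_{i+1}, u_{i+2}] + [u_{i+2}, u_{i+3}]⟩`,
since every term containing a repeated `uⱼ` vanishes. Then
`Δ'₁(α) Δ'₂(β) - Δ'₂(α) Δ'₁(β) = (α β⁻¹ - α⁻¹ β) (P₁ P₂ - Q₁ Q₂)`, so the type is constant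
as soon as `Pᵢ P_{i+1} = Qᵢ Q_{i+1}`. For any five vectors,
`P₁ P₂ - Q₁ Q₂ = -[u₂, u₃, u₄] ⟨u₁ - u₅, [u₁, u₂] + ⋯ + [u₄, u₅]⟩`, and for a closed hexagon
the closing condition `∑ [uᵢ, u_{i+1}] = 0` turns that sum into `[u₁ - u₅, u₆]`, which is
orthogonal to `u₁ - u₅`.
-/

open Matrix

section CrossProduct

variable {R : Type*} [CommRing R]

theorem triple_product_alternately_scaled_differences (a b c d : Fin 3 → R) (s t : R) :
    (s • b - t • a) ⬝ᵥ ((t • c - s • b) ⨯₃ (s • d - t • c)) =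
      s * t * (s * (d ⬝ᵥ (a ⨯₃ b + b ⨯₃ c)) - t * (a ⬝ᵥ (b ⨯₃ c + c ⨯₃ d))) := by
  simp only [cross_apply, dotProduct, Fin.sum_univ_three, Pi.sub_apply, Pi.add_apply,
    Pi.smul_apply, smul_eq_mul, cons_val_zero, cons_val_one, head_cons, cons_val_two, tail_cons]
  ring

theorem pentagon_triple_product_identity (u₁ u₂ u₃ u₄ u₅ : Fin 3 → R) :
    (u₄ ⬝ᵥ (u₁ ⨯₃ u₂ + u₂ ⨯₃ u₃)) * (u₅ ⬝ᵥ (u₂ ⨯₃ u₃ + u₃ ⨯₃ u₄)) -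
        (u₁ ⬝ᵥ (u₂ ⨯₃ u₃ + u₃ ⨯₃ u₄)) * (u₂ ⬝ᵥ (u₃ ⨯₃ u₄ + u₄ ⨯₃ u₅)) =
      -(u₂ ⬝ᵥ (u₃ ⨯₃ u₄)) *
        ((u₁ - u₅) ⬝ᵥ (u₁ ⨯₃ u₂ + u₂ ⨯₃ u₃ + u₃ ⨯₃ u₄ + u₄ ⨯₃ u₅)) := by
  simp only [cross_apply, dotProduct, Fin.sum_univ_three, Pi.sub_apply, Pi.add_apply,
    cons_val_zero, cons_val_one, head_cons, cons_val_two, tail_cons]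
  ring

theorem triple_products_mul_eq_of_cross_sum_eq_zero (u₁ u₂ u₃ u₄ u₅ u₆ : Fin 3 → R)
    (hS : u₁ ⨯₃ u₂ + u₂ ⨯₃ u₃ + u₃ ⨯₃ u₄ + u₄ ⨯₃ u₅ + u₅ ⨯₃ u₆ + u₆ ⨯₃ u₁ = 0) :
    (u₄ ⬝ᵥ (u₁ ⨯₃ u₂ + u₂ ⨯₃ u₃)) * (u₅ ⬝ᵥ (u₂ ⨯₃ u₃ + u₃ ⨯₃ u₄)) =
      (u₁ ⬝ᵥ (u₂ ⨯₃ u₃ + u₃ ⨯₃ u₄)) * (u₂ ⬝ᵥ (u₃ ⨯₃ u₄ + u₄ ⨯₃ u₅)) := by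
  have hsum : u₁ ⨯₃ u₂ + u₂ ⨯₃ u₃ + u₃ ⨯₃ u₄ + u₄ ⨯₃ u₅ = (u₁ - u₅) ⨯₃ u₆ := by
    rw [LinearMap.map_sub₂, ← cross_anticomm u₆ u₁]
    linear_combination hS
  rw [← sub_eq_zero, pentagon_triple_product_identity, hsum, dot_self_cross, mul_zero]

end CrossProduct

theorem derived_hexagon_type_independent_general (v₁ v₂ v₃ v₄ v₅ v₆ : Fin 3 → ℝ)
    (hclosed : v₁ + v₂ + v₃ + v₄ + v₅ + v₆ = 0)
    (u₁ u₂ u₃ u₄ u₅ u₆ : Fin 3 → ℝ)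
    (h₁₂ : u₁ ⨯₃ u₂ = v₂) (h₂₃ : u₂ ⨯₃ u₃ = v₃) (h₃₄ : u₃ ⨯₃ u₄ = v₄)
    (h₄₅ : u₄ ⨯₃ u₅ = v₅) (h₅₆ : u₅ ⨯₃ u₆ = v₆) (h₆₁ : u₆ ⨯₃ u₁ = v₁)
    (w₁ w₂ w₃ w₄ w₅ : ℝ → Fin 3 → ℝ)
    (hw₁ : ∀ α : ℝ, w₁ α = α • u₂ - α⁻¹ • u₁)
    (hw₂ : ∀ α : ℝ, w₂ α = α⁻¹ • u₃ - α • u₂)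
    (hw₃ : ∀ α : ℝ, w₃ α = α • u₄ - α⁻¹ • u₃)
    (hw₄ : ∀ α : ℝ, w₄ α = α⁻¹ • u₅ - α • u₄)
    (hw₅ : ∀ α : ℝ, w₅ α = α • u₆ - α⁻¹ • u₅)
    (Δ'₁ Δ'₂ Δ'₃ : ℝ → ℝ)
    (hΔ'₁ : ∀ α : ℝ, Δ'₁ α = w₁ α ⬝ᵥ (w₂ α ⨯₃ w₃ α))
    (hΔ'₂ : ∀ α : ℝ, Δ'₂ α = w₂ α ⬝ᵥ (w₃ α ⨯₃ w₄ α))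
    (hΔ'₃ : ∀ α : ℝ, Δ'₃ α = w₃ α ⬝ᵥ (w₄ α ⨯₃ w₅ α)) :
    ∀ α β : ℝ, α ≠ 0 → β ≠ 0 →
      Δ'₁ α * Δ'₂ β = Δ'₂ α * Δ'₁ β ∧ Δ'₂ α * Δ'₃ β = Δ'₃ α * Δ'₂ β := by
  intro α β hα hβ
  have hS : u₁ ⨯₃ u₂ + u₂ ⨯₃ u₃ + u₃ ⨯₃ u₄ + u₄ ⨯₃ u₅ + u₅ ⨯₃ u₆ + u₆ ⨯₃ u₁ = 0 := by
    rw [h₁₂, h₂₃, h₃₄, h₄₅, h₅₆, h₆₁]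
    linear_combination hclosed
  have key₁₂ := triple_products_mul_eq_of_cross_sum_eq_zero u₁ u₂ u₃ u₄ u₅ u₆ hS
  have key₂₃ := triple_products_mul_eq_of_cross_sum_eq_zero u₂ u₃ u₄ u₅ u₆ u₁
    (by rw [← hS]; abel)
  simp only [hΔ'₁, hΔ'₂, hΔ'₃, hw₁, hw₂, hw₃, hw₄, hw₅,
    triple_product_alternately_scaled_differences, mul_inv_cancel₀ hα, inv_mul_cancel₀ hα,
    mul_inv_cancel₀ hβ, inv_mul_cancel₀ hβ, one_mul]
  constructor
  · linear_combination (α * β⁻¹ - α⁻¹ * β) * key₁₂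
  · linear_combination (α⁻¹ * β - α * β⁻¹) * key₂₃

/-- Let `u₁, …, u₆` be a support system for a generic closed hexagon with
edge vectors `v₁, …, v₆`.  For nonzero `α`, the rescaled support system is
`u'ᵢ(α) = α • uᵢ` for even `i` and `u'ᵢ(α) = α⁻¹ • uᵢ` for odd `i`; its derived hexagon
has edge vectors `wᵢ(α) = u'_{i+1}(α) - u'ᵢ(α)` (indices mod 6) and determinants
`Δ'ᵢ(α) = ⟨wᵢ(α), [w_{i+1}(α), w_{i+2}(α)]⟩`.  Then for all nonzero `α, β` we have
`Δ'₁(α)·Δ'₂(β) = Δ'₂(α)·Δ'₁(β)` and `Δ'₂(α)·Δ'₃(β) = Δ'₃(α)·Δ'₂(β)`: the type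
`Δ'₁ : Δ'₂ : Δ'₃` is the same for all derivatives of the hexagon. -/
theorem derived_hexagon_type_independent (v₁ v₂ v₃ v₄ v₅ v₆ : Fin 3 → ℝ)
    (hclosed : v₁ + v₂ + v₃ + v₄ + v₅ + v₆ = 0)
    (hΔ₁ : v₁ ⬝ᵥ (v₂ ⨯₃ v₃) ≠ 0)
    (hΔ₂ : v₂ ⬝ᵥ (v₃ ⨯₃ v₄) ≠ 0)
    (hΔ₃ : v₃ ⬝ᵥ (v₄ ⨯₃ v₅) ≠ 0)
    (hΔ₄ : v₄ ⬝ᵥ (v₅ ⨯₃ v₆) ≠ 0)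
    (hΔ₅ : v₅ ⬝ᵥ (v₆ ⨯₃ v₁) ≠ 0)
    (hΔ₆ : v₆ ⬝ᵥ (v₁ ⨯₃ v₂) ≠ 0)
    (u₁ u₂ u₃ u₄ u₅ u₆ : Fin 3 → ℝ)
    (h₁₂ : u₁ ⨯₃ u₂ = v₂) (h₂₃ : u₂ ⨯₃ u₃ = v₃) (h₃₄ : u₃ ⨯₃ u₄ = v₄)
    (h₄₅ : u₄ ⨯₃ u₅ = v₅) (h₅₆ : u₅ ⨯₃ u₆ = v₆) (h₆₁ : u₆ ⨯₃ u₁ = v₁)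
    (w₁ w₂ w₃ w₄ w₅ w₆ : ℝ → Fin 3 → ℝ)
    (hw₁ : ∀ α : ℝ, w₁ α = α • u₂ - α⁻¹ • u₁)
    (hw₂ : ∀ α : ℝ, w₂ α = α⁻¹ • u₃ - α • u₂)
    (hw₃ : ∀ α : ℝ, w₃ α = α • u₄ - α⁻¹ • u₃)
    (hw₄ : ∀ α : ℝ, w₄ α = α⁻¹ • u₅ - α • u₄)
    (hw₅ : ∀ α : ℝ, w₅ α = α • u₆ - α⁻¹ • u₅)
    (hw₆ : ∀ α : ℝ, w₆ α = α⁻¹ • u₁ - α • u₆)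
    (Δ'₁ Δ'₂ Δ'₃ : ℝ → ℝ)
    (hΔ'₁ : ∀ α : ℝ, Δ'₁ α = w₁ α ⬝ᵥ (w₂ α ⨯₃ w₃ α))
    (hΔ'₂ : ∀ α : ℝ, Δ'₂ α = w₂ α ⬝ᵥ (w₃ α ⨯₃ w₄ α))
    (hΔ'₃ : ∀ α : ℝ, Δ'₃ α = w₃ α ⬝ᵥ (w₄ α ⨯₃ w₅ α)) :
    ∀ α β : ℝ, α ≠ 0 → β ≠ 0 →
      Δ'₁ α * Δ'₂ β = Δ'₂ α * Δ'₁ β ∧ Δ'₂ α * Δ'₃ β = Δ'₃ α * Δ'₂ β :=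
  derived_hexagon_type_independent_general v₁ v₂ v₃ v₄ v₅ v₆ hclosed u₁ u₂ u₃ u₄ u₅ u₆ h₁₂ h₂₃ h₃₄
    h₄₅ h₅₆ h₆₁ w₁ w₂ w₃ w₄ w₅ hw₁ hw₂ hw₃ hw₄ hw₅ Δ'₁ Δ'₂ Δ'₃ hΔ'₁ hΔ'₂ hΔ'₃
end

section
/- Let v_1,…,v_6 ∈ ℝ³ be the edge vectors of a generic regular closed hexagon P with support system u_1,…,u_6; let w_i = u_{i+1} − u_i (indices mod 6) be the edge vectors of the derived hexagon P', with determinants Δ'_i = ⟨w_i,[w_{i+1},w_{i+2}]⟩, and assume P' is generic with support system t_1,…,t_6. Let s_i = t_{i+1} − t_i (indices mod 6) be the edge vectors of the second derivative P'', with determinants Δ''_i = ⟨s_i,[s_{i+1},s_{i+2}]⟩. Then Δ''_1·Δ'_3 = Δ''_2·Δ'_2, Δ''_2·Δ'_1 = Δ''_3·Δ'_3 and Δ''_3·Δ'_2 = Δ''_1·Δ'_1; that is, the types (cyclic ratios Δ_1 : Δ_2 : Δ_3) of P' and P'' coincide. -/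
/-!
A support system `t` of the derived hexagon `w` is recovered from `w` up to scale:
`[w_{i+1}, w_{i+2}] = δ_i t_{i+1}` with `δ_i = ⟨t_i, [t_{i+1}, t_{i+2}]⟩`. Hence
`Δ'_{i+1} = δ_i δ_{i+1}`, and every triple product of edges of `P'` is a product of triple
products of the `t`'s, while `Δ''_i` is a signed sum of four of them.

Closedness of `P` says `∑ [u_i, u_{i+1}] = 0`. Dotting this with diagonals `u_a - u_b` of the
first support system gives cubic relations between the triple products of edges of `P'`
(for instance `Δ'_i = Δ'_{i+3}`). Rewritten in the `t`'s they become three relations from which,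
after cancelling one `δ`, `Δ''_i Δ'_{i+2} = Δ''_{i+1} Δ'_{i+1}` follows; two instances of this
give the theorem.
-/

open Matrix

namespace Hexagon

variable {R : Type*} [CommRing R]

-- Indices are 0-based: `Δ v 0` is the paper's `Δ₁`, and `IsSupport v u` says
-- `[u_i, u_{i+1}] = v_{i+1}`.
def Δ (v : Fin 6 → Fin 3 → R) (i : Fin 6) : R := v i ⬝ᵥ v (i + 1) ⨯₃ v (i + 2)

def derived (u : Fin 6 → Fin 3 → R) (i : Fin 6) : Fin 3 → R := u (i + 1) - u i

def IsSupport (v u : Fin 6 → Fin 3 → R) : Prop := ∀ i, u i ⨯₃ u (i + 1) = v (i + 1)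

theorem cross_dot_eq_dot_cross (a b c : Fin 3 → R) : a ⨯₃ b ⬝ᵥ c = a ⬝ᵥ b ⨯₃ c := by
  rw [dotProduct_comm, triple_product_permutation]

theorem cross_cross_cross_self (a b c : Fin 3 → R) :
    (a ⨯₃ b) ⨯₃ (b ⨯₃ c) = (a ⬝ᵥ b ⨯₃ c) • b := by
  rw [cross_cross_eq_smul_sub_smul', dot_cross_self, zero_smul, sub_zero,
    cross_dot_eq_dot_cross]

theorem Δ_derived (t : Fin 6 → Fin 3 → R) (i : Fin 6) :
    Δ (derived t) i = Δ t (i + 1) - t i ⬝ᵥ t (i + 2) ⨯₃ t (i + 3)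
      + t i ⬝ᵥ t (i + 1) ⨯₃ t (i + 3) - Δ t i := by
  simp only [Δ, derived, add_assoc, Fin.reduceAdd, dotProduct, Pi.sub_apply, map_sub,
    LinearMap.sub_apply, cross_apply, Fin.sum_univ_three, cons_val_zero, cons_val_one, cons_val]
  ring

theorem sum_cross_eq (u : Fin 6 → Fin 3 → R) (j : Fin 6) :
    ∑ i, u i ⨯₃ u (i + 1) = u j ⨯₃ u (j + 1) + u (j + 1) ⨯₃ u (j + 2) + u (j + 2) ⨯₃ u (j + 3)
      + u (j + 3) ⨯₃ u (j + 4) + u (j + 4) ⨯₃ u (j + 5) + u (j + 5) ⨯₃ u j := by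
  rw [← Equiv.sum_comp (Equiv.addLeft j)]
  simp only [Fin.sum_univ_six, Equiv.coe_addLeft, add_zero, add_assoc, Fin.reduceAdd]

namespace IsSupport

variable {v u : Fin 6 → Fin 3 → R}

theorem sum_cross (h : IsSupport v u) : ∑ i, u i ⨯₃ u (i + 1) = ∑ i, v i := by
  rw [Finset.sum_congr rfl fun i _ => h i]
  exact Equiv.sum_comp (Equiv.addRight 1) v

theorem cross_eq_smul (h : IsSupport v u) (i : Fin 6) :
    v (i + 1) ⨯₃ v (i + 2) = Δ u i • u (i + 1) := by
  have h₂ : u (i + 1) ⨯₃ u (i + 2) = v (i + 2) := by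
    simpa only [add_assoc, Fin.reduceAdd] using h (i + 1)
  rw [← h i, ← h₂, cross_cross_cross_self, Δ]

theorem Δ_add_one (h : IsSupport v u) (i : Fin 6) : Δ v (i + 1) = Δ u i * Δ u (i + 1) := by
  have h₂ := h.cross_eq_smul (i + 1)
  simp only [Δ, add_assoc, Fin.reduceAdd] at h₂ ⊢
  rw [h₂, dotProduct_smul, ← h i, cross_dot_eq_dot_cross, smul_eq_mul, mul_comm]

theorem dot_cross_add (h : IsSupport v u) (i : Fin 6) :
    v (i + 1) ⬝ᵥ v (i + 2) ⨯₃ (v (i + 3) + v (i + 4))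
      = Δ u i * (Δ u (i + 1) + u (i + 1) ⬝ᵥ u (i + 3) ⨯₃ u (i + 4)) := by
  have h₃ : u (i + 2) ⨯₃ u (i + 3) = v (i + 3) := by
    simpa only [add_assoc, Fin.reduceAdd] using h (i + 2)
  have h₄ : u (i + 3) ⨯₃ u (i + 4) = v (i + 4) := by
    simpa only [add_assoc, Fin.reduceAdd] using h (i + 3)
  rw [← cross_dot_eq_dot_cross, h.cross_eq_smul, smul_dotProduct, ← h₃, ← h₄, dotProduct_add,
    smul_eq_mul]
  simp only [Δ, add_assoc, Fin.reduceAdd]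

theorem add_dot_cross (h : IsSupport v u) (i : Fin 6) :
    (v (i + 1) + v (i + 2)) ⬝ᵥ v (i + 3) ⨯₃ v (i + 4)
      = Δ u (i + 2) * (u i ⬝ᵥ u (i + 1) ⨯₃ u (i + 3) + Δ u (i + 1)) := by
  have h₂ : u (i + 1) ⨯₃ u (i + 2) = v (i + 2) := by
    simpa only [add_assoc, Fin.reduceAdd] using h (i + 1)
  have h₃₄ := h.cross_eq_smul (i + 2)
  simp only [add_assoc, Fin.reduceAdd] at h₃₄
  rw [h₃₄, dotProduct_smul, ← h i, ← h₂, add_dotProduct, cross_dot_eq_dot_cross,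
    cross_dot_eq_dot_cross, smul_eq_mul]
  simp only [Δ, add_assoc, Fin.reduceAdd]

end IsSupport

variable {v u t : Fin 6 → Fin 3 → R}

theorem dot_sum_cross_eq_zero (hv : ∑ i, v i = 0) (hu : IsSupport v u) (j : Fin 6)
    (x : Fin 3 → R) :
    x ⬝ᵥ (u j ⨯₃ u (j + 1) + u (j + 1) ⨯₃ u (j + 2) + u (j + 2) ⨯₃ u (j + 3)
      + u (j + 3) ⨯₃ u (j + 4) + u (j + 4) ⨯₃ u (j + 5) + u (j + 5) ⨯₃ u j) = 0 := by
  rw [← sum_cross_eq, hu.sum_cross, hv, dotProduct_zero]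

theorem Δ_derived_add_three (hv : ∑ i, v i = 0) (hu : IsSupport v u) (j : Fin 6) :
    Δ (derived u) (j + 3) = Δ (derived u) j := by
  have h := dot_sum_cross_eq_zero hv hu j (u (j + 3) - u j)
  simp only [Δ, derived, add_assoc, Fin.reduceAdd, add_zero]
  simp only [dotProduct, Pi.sub_apply, Pi.add_apply, map_sub, LinearMap.sub_apply, cross_apply,
    Fin.sum_univ_three, cons_val_zero, cons_val_one, cons_val] at h ⊢
  linear_combination -h

theorem add_dot_cross_derived_eq_zero (hv : ∑ i, v i = 0) (hu : IsSupport v u) (j : Fin 6) :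
    derived u j ⬝ᵥ derived u (j + 1) ⨯₃ (derived u (j + 2) + derived u (j + 3))
      + (derived u j + derived u (j + 1)) ⬝ᵥ derived u (j + 2) ⨯₃ derived u (j + 3) = 0 := by
  have h := dot_sum_cross_eq_zero hv hu j (u (j + 4) - u j)
  simp only [derived, add_assoc, Fin.reduceAdd]
  simp only [dotProduct, Pi.sub_apply, Pi.add_apply, map_sub, map_add, LinearMap.sub_apply,
    cross_apply, Fin.sum_univ_three, cons_val_zero, cons_val_one, cons_val] at h ⊢
  linear_combination h

theorem add_dot_cross_derived_add_two_eq_zero (hv : ∑ i, v i = 0) (hu : IsSupport v u)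
    (j : Fin 6) :
    derived u j ⬝ᵥ derived u (j + 1) ⨯₃ (derived u (j + 2) + derived u (j + 3))
      + (derived u (j + 2) + derived u (j + 3)) ⬝ᵥ derived u (j + 4) ⨯₃ derived u (j + 5)
      = 0 := by
  have h := dot_sum_cross_eq_zero hv hu j (u (j + 4) - u (j + 2))
  simp only [derived, add_assoc, Fin.reduceAdd, add_zero]
  simp only [dotProduct, Pi.sub_apply, Pi.add_apply, map_sub, map_add, LinearMap.sub_apply,
    cross_apply, Fin.sum_univ_three, cons_val_zero, cons_val_one, cons_val] at h ⊢
  linear_combination h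

theorem Δ_derived_mul_Δ_derived [IsDomain R] (hv : ∑ i, v i = 0) (hu : IsSupport v u)
    (ht : IsSupport (derived u) t) (j : Fin 6) (hj : Δ t j ≠ 0) :
    Δ (derived t) (j + 1) * Δ (derived u) (j + 3)
      = Δ (derived t) (j + 2) * Δ (derived u) (j + 2) := by
  set δ := Δ t
  set X : Fin 6 → R := fun i => t i ⬝ᵥ t (i + 1) ⨯₃ t (i + 3) + δ (i + 1)
  set Y : Fin 6 → R := fun i => t i ⬝ᵥ t (i + 2) ⨯₃ t (i + 3) + δ i
  have hs (i : Fin 6) : Δ (derived t) i = X i - Y i := by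
    simp only [Δ_derived, X, Y]; ring
  have hw₂ : Δ (derived u) (j + 2) = δ (j + 1) * δ (j + 2) := by
    simpa only [add_assoc, Fin.reduceAdd] using ht.Δ_add_one (j + 1)
  have hw₃ : Δ (derived u) (j + 3) = δ (j + 2) * δ (j + 3) := by
    simpa only [add_assoc, Fin.reduceAdd] using ht.Δ_add_one (j + 2)
  have h₁ : δ (j + 3) * X (j + 1) + δ (j + 1) * Y (j + 2) = 0 := by
    have h := add_dot_cross_derived_eq_zero hv hu (j + 2)
    have hF := ht.dot_cross_add (j + 1)
    have hG := ht.add_dot_cross (j + 1)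
    simp only [X, Y, add_assoc, Fin.reduceAdd] at h hF hG ⊢
    linear_combination h - hF - hG
  have h₂ : δ j * Y (j + 1) + δ (j + 4) * X (j + 2) = 0 := by
    have h := add_dot_cross_derived_add_two_eq_zero hv hu (j + 1)
    have hF := ht.dot_cross_add j
    have hG := ht.add_dot_cross (j + 2)
    simp only [X, Y, add_assoc, Fin.reduceAdd, add_zero] at h hF hG ⊢
    linear_combination h - hF - hG
  have h₃ : δ j * δ (j + 1) = δ (j + 3) * δ (j + 4) := by
    have h := Δ_derived_add_three hv hu (j + 1)
    have hw₄ := ht.Δ_add_one (j + 3)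
    simp only [add_assoc, Fin.reduceAdd] at h hw₄
    rw [← ht.Δ_add_one j, ← h, hw₄]
  have key : δ (j + 3) * Y (j + 1) + δ (j + 1) * X (j + 2) = 0 :=
    mul_left_cancel₀ hj (by linear_combination δ (j + 3) * h₂ + X (j + 2) * h₃)
  rw [hs, hs, hw₂, hw₃]
  linear_combination δ (j + 2) * (h₁ - key)

end Hexagon

open Hexagon

theorem second_derived_hexagon_same_type_general (v₁ v₂ v₃ v₄ v₅ v₆ : Fin 3 → ℝ)
    (hclosed : v₁ + v₂ + v₃ + v₄ + v₅ + v₆ = 0)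
    (u₁ u₂ u₃ u₄ u₅ u₆ : Fin 3 → ℝ)
    (h₁₂ : u₁ ⨯₃ u₂ = v₂) (h₂₃ : u₂ ⨯₃ u₃ = v₃) (h₃₄ : u₃ ⨯₃ u₄ = v₄)
    (h₄₅ : u₄ ⨯₃ u₅ = v₅) (h₅₆ : u₅ ⨯₃ u₆ = v₆) (h₆₁ : u₆ ⨯₃ u₁ = v₁)
    (w₁ w₂ w₃ w₄ w₅ w₆ : Fin 3 → ℝ)
    (hw₁ : w₁ = u₂ - u₁) (hw₂ : w₂ = u₃ - u₂) (hw₃ : w₃ = u₄ - u₃)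
    (hw₄ : w₄ = u₅ - u₄) (hw₅ : w₅ = u₆ - u₅) (hw₆ : w₆ = u₁ - u₆)
    (Δ'₁ Δ'₂ Δ'₃ Δ'₄ Δ'₅ Δ'₆ : ℝ)
    (hΔ'₁ : Δ'₁ = w₁ ⬝ᵥ (w₂ ⨯₃ w₃))
    (hΔ'₂ : Δ'₂ = w₂ ⬝ᵥ (w₃ ⨯₃ w₄))
    (hΔ'₃ : Δ'₃ = w₃ ⬝ᵥ (w₄ ⨯₃ w₅))
    (hgen' : Δ'₁ ≠ 0 ∧ Δ'₂ ≠ 0 ∧ Δ'₃ ≠ 0 ∧ Δ'₄ ≠ 0 ∧ Δ'₅ ≠ 0 ∧ Δ'₆ ≠ 0)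
    (t₁ t₂ t₃ t₄ t₅ t₆ : Fin 3 → ℝ)
    (ht₁₂ : t₁ ⨯₃ t₂ = w₂) (ht₂₃ : t₂ ⨯₃ t₃ = w₃) (ht₃₄ : t₃ ⨯₃ t₄ = w₄)
    (ht₄₅ : t₄ ⨯₃ t₅ = w₅) (ht₅₆ : t₅ ⨯₃ t₆ = w₆) (ht₆₁ : t₆ ⨯₃ t₁ = w₁)
    (s₁ s₂ s₃ s₄ s₅ : Fin 3 → ℝ)
    (hs₁ : s₁ = t₂ - t₁) (hs₂ : s₂ = t₃ - t₂) (hs₃ : s₃ = t₄ - t₃)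
    (hs₄ : s₄ = t₅ - t₄) (hs₅ : s₅ = t₆ - t₅)
    (Δ''₁ Δ''₂ Δ''₃ : ℝ)
    (hΔ''₁ : Δ''₁ = s₁ ⬝ᵥ (s₂ ⨯₃ s₃))
    (hΔ''₂ : Δ''₂ = s₂ ⬝ᵥ (s₃ ⨯₃ s₄))
    (hΔ''₃ : Δ''₃ = s₃ ⬝ᵥ (s₄ ⨯₃ s₅)) :
    Δ''₁ * Δ'₃ = Δ''₂ * Δ'₂ ∧ Δ''₂ * Δ'₁ = Δ''₃ * Δ'₃ ∧ Δ''₃ * Δ'₂ = Δ''₁ * Δ'₁ := by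
  subst hw₁ hw₂ hw₃ hw₄ hw₅ hw₆ hs₁ hs₂ hs₃ hs₄ hs₅
  obtain ⟨hΔ'₁_ne, -, hΔ'₃_ne, -⟩ := hgen'
  set v := ![v₁, v₂, v₃, v₄, v₅, v₆]
  set u := ![u₁, u₂, u₃, u₄, u₅, u₆]
  set t := ![t₁, t₂, t₃, t₄, t₅, t₆]
  have hv : ∑ i, v i = 0 := by simpa [v, Fin.sum_univ_six] using hclosed
  have hu : IsSupport v u := by
    intro i; fin_cases i <;> simp [u, v, h₁₂, h₂₃, h₃₄, h₄₅, h₅₆, h₆₁]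
  have ht : IsSupport (derived u) t := by
    intro i; fin_cases i <;> simp [derived, u, t, ht₁₂, ht₂₃, ht₃₄, ht₄₅, ht₅₆, ht₆₁]
  have hΔ' : Δ (derived u) 0 = Δ'₁ ∧ Δ (derived u) 1 = Δ'₂ ∧ Δ (derived u) 2 = Δ'₃ := by
    simp only [Δ, derived, u, Fin.reduceAdd, cons_val, hΔ'₁, hΔ'₂, hΔ'₃, and_self]
  have hΔ'' : Δ (derived t) 0 = Δ''₁ ∧ Δ (derived t) 1 = Δ''₂ ∧ Δ (derived t) 2 = Δ''₃ := by
    simp only [Δ, derived, t, Fin.reduceAdd, cons_val, hΔ''₁, hΔ''₂, hΔ''₃, and_self]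
  have hδ : Δ t 5 * Δ t 0 ≠ 0 := by
    have h := ht.Δ_add_one 5
    simp only [Fin.reduceAdd] at h
    rwa [← h, hΔ'.1]
  have e₁ := Δ_derived_mul_Δ_derived hv hu ht 5 (left_ne_zero_of_mul hδ)
  have e₂ := Δ_derived_mul_Δ_derived hv hu ht 0 (right_ne_zero_of_mul hδ)
  rw [zero_add, Δ_derived_add_three hv hu 0] at e₂
  simp only [Fin.reduceAdd, zero_add, hΔ'.1, hΔ'.2.1, hΔ'.2.2, hΔ''.1, hΔ''.2.1, hΔ''.2.2] at e₁ e₂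
  refine ⟨e₁, e₂, mul_right_cancel₀ hΔ'₃_ne ?_⟩
  linear_combination -Δ'₁ * e₁ - Δ'₂ * e₂

/-- Let `P` be a generic regular closed hexagon with edge vectors
`v₁, …, v₆` and support system `u₁, …, u₆`; let `wᵢ = u_{i+1} - uᵢ` (indices mod 6) be the
edge vectors of the derived hexagon `P'`, with determinants `Δ'ᵢ`.  Assume `P'` is generic
with support system `t₁, …, t₆` and let `sᵢ = t_{i+1} - tᵢ` be the edge vectors of the
second derivative `P''`, with determinants `Δ''ᵢ`.  Then `Δ''₁·Δ'₃ = Δ''₂·Δ'₂`,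
`Δ''₂·Δ'₁ = Δ''₃·Δ'₃` and `Δ''₃·Δ'₂ = Δ''₁·Δ'₁`: the types of `P'` and `P''` coincide. -/
theorem second_derived_hexagon_same_type (v₁ v₂ v₃ v₄ v₅ v₆ : Fin 3 → ℝ)
    (hclosed : v₁ + v₂ + v₃ + v₄ + v₅ + v₆ = 0)
    (hΔ₁ : v₁ ⬝ᵥ (v₂ ⨯₃ v₃) ≠ 0)
    (hΔ₂ : v₂ ⬝ᵥ (v₃ ⨯₃ v₄) ≠ 0)
    (hΔ₃ : v₃ ⬝ᵥ (v₄ ⨯₃ v₅) ≠ 0)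
    (hΔ₄ : v₄ ⬝ᵥ (v₅ ⨯₃ v₆) ≠ 0)
    (hΔ₅ : v₅ ⬝ᵥ (v₆ ⨯₃ v₁) ≠ 0)
    (hΔ₆ : v₆ ⬝ᵥ (v₁ ⨯₃ v₂) ≠ 0)
    (u₁ u₂ u₃ u₄ u₅ u₆ : Fin 3 → ℝ)
    (h₁₂ : u₁ ⨯₃ u₂ = v₂) (h₂₃ : u₂ ⨯₃ u₃ = v₃) (h₃₄ : u₃ ⨯₃ u₄ = v₄)
    (h₄₅ : u₄ ⨯₃ u₅ = v₅) (h₅₆ : u₅ ⨯₃ u₆ = v₆) (h₆₁ : u₆ ⨯₃ u₁ = v₁)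
    (w₁ w₂ w₃ w₄ w₅ w₆ : Fin 3 → ℝ)
    (hw₁ : w₁ = u₂ - u₁) (hw₂ : w₂ = u₃ - u₂) (hw₃ : w₃ = u₄ - u₃)
    (hw₄ : w₄ = u₅ - u₄) (hw₅ : w₅ = u₆ - u₅) (hw₆ : w₆ = u₁ - u₆)
    (Δ'₁ Δ'₂ Δ'₃ Δ'₄ Δ'₅ Δ'₆ : ℝ)
    (hΔ'₁ : Δ'₁ = w₁ ⬝ᵥ (w₂ ⨯₃ w₃))
    (hΔ'₂ : Δ'₂ = w₂ ⬝ᵥ (w₃ ⨯₃ w₄))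
    (hΔ'₃ : Δ'₃ = w₃ ⬝ᵥ (w₄ ⨯₃ w₅))
    (hΔ'₄ : Δ'₄ = w₄ ⬝ᵥ (w₅ ⨯₃ w₆))
    (hΔ'₅ : Δ'₅ = w₅ ⬝ᵥ (w₆ ⨯₃ w₁))
    (hΔ'₆ : Δ'₆ = w₆ ⬝ᵥ (w₁ ⨯₃ w₂))
    (hgen' : Δ'₁ ≠ 0 ∧ Δ'₂ ≠ 0 ∧ Δ'₃ ≠ 0 ∧ Δ'₄ ≠ 0 ∧ Δ'₅ ≠ 0 ∧ Δ'₆ ≠ 0)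
    (t₁ t₂ t₃ t₄ t₅ t₆ : Fin 3 → ℝ)
    (ht₁₂ : t₁ ⨯₃ t₂ = w₂) (ht₂₃ : t₂ ⨯₃ t₃ = w₃) (ht₃₄ : t₃ ⨯₃ t₄ = w₄)
    (ht₄₅ : t₄ ⨯₃ t₅ = w₅) (ht₅₆ : t₅ ⨯₃ t₆ = w₆) (ht₆₁ : t₆ ⨯₃ t₁ = w₁)
    (s₁ s₂ s₃ s₄ s₅ s₆ : Fin 3 → ℝ)
    (hs₁ : s₁ = t₂ - t₁) (hs₂ : s₂ = t₃ - t₂) (hs₃ : s₃ = t₄ - t₃)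
    (hs₄ : s₄ = t₅ - t₄) (hs₅ : s₅ = t₆ - t₅) (hs₆ : s₆ = t₁ - t₆)
    (Δ''₁ Δ''₂ Δ''₃ : ℝ)
    (hΔ''₁ : Δ''₁ = s₁ ⬝ᵥ (s₂ ⨯₃ s₃))
    (hΔ''₂ : Δ''₂ = s₂ ⬝ᵥ (s₃ ⨯₃ s₄))
    (hΔ''₃ : Δ''₃ = s₃ ⬝ᵥ (s₄ ⨯₃ s₅)) :
    Δ''₁ * Δ'₃ = Δ''₂ * Δ'₂ ∧ Δ''₂ * Δ'₁ = Δ''₃ * Δ'₃ ∧ Δ''₃ * Δ'₂ = Δ''₁ * Δ'₁ :=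
  second_derived_hexagon_same_type_general v₁ v₂ v₃ v₄ v₅ v₆ hclosed u₁ u₂ u₃ u₄ u₅ u₆ h₁₂ h₂₃ h₃₄
    h₄₅ h₅₆ h₆₁ w₁ w₂ w₃ w₄ w₅ w₆ hw₁ hw₂ hw₃ hw₄ hw₅ hw₆ Δ'₁ Δ'₂ Δ'₃ Δ'₄ Δ'₅ Δ'₆ hΔ'₁ hΔ'₂ hΔ'₃
    hgen' t₁ t₂ t₃ t₄ t₅ t₆ ht₁₂ ht₂₃ ht₃₄ ht₄₅ ht₅₆ ht₆₁ s₁ s₂ s₃ s₄ s₅ hs₁ hs₂ hs₃ hs₄ hs₅ Δ''₁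
    Δ''₂ Δ''₃ hΔ''₁ hΔ''₂ hΔ''₃
end

section
/- Let u_1,…,u_6 ∈ ℝ³ be arbitrary vectors and define v_i = [u_{i−1}, u_i] for i = 1,…,6 (indices mod 6, so v_1 = [u_6,u_1], v_2 = [u_1,u_2], …, v_6 = [u_5,u_6]). Let Δ_i = ⟨v_i, [v_{i+1}, v_{i+2}]⟩ (indices mod 6). Then Δ_1·Δ_3·Δ_5 = Δ_2·Δ_4·Δ_6. -/
/-!
Two consecutive `vᵢ` share a factor, so `vᵢ × vᵢ₊₁ = [uᵢ₋₁, uᵢ, uᵢ₊₁] uᵢ` with `[a, b, c]`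
the triple product (indices mod 6). Hence `Δᵢ = Tᵢ₋₁ Tᵢ` for `Tᵢ = [uᵢ, uᵢ₊₁, uᵢ₊₂]`,
and both sides of the identity equal `T₁ T₂ ⋯ T₆`.
-/

open Matrix

variable {R : Type*} [CommRing R]

theorem cross_cross_cross_of_shared (a b c : Fin 3 → R) :
    a ⨯₃ b ⨯₃ (b ⨯₃ c) = (a ⬝ᵥ b ⨯₃ c) • b := by
  rw [cross_cross_eq_smul_sub_smul, dot_self_cross, zero_smul, sub_zero]

theorem cross_dot_cross_cross_cross (a b c d : Fin 3 → R) :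
    a ⨯₃ b ⬝ᵥ (b ⨯₃ c ⨯₃ (c ⨯₃ d)) = (a ⬝ᵥ b ⨯₃ c) * (b ⬝ᵥ c ⨯₃ d) := by
  rw [cross_cross_cross_of_shared, dotProduct_smul, smul_eq_mul,
    dotProduct_comm (a ⨯₃ b), triple_product_permutation c, mul_comm]

/-- For arbitrary vectors `u₁, …, u₆ ∈ ℝ³`, set `vᵢ = [u_{i-1}, uᵢ]`
(indices mod 6) and `Δᵢ = ⟨vᵢ, [v_{i+1}, v_{i+2}]⟩` (indices mod 6).  Then
`Δ₁·Δ₃·Δ₅ = Δ₂·Δ₄·Δ₆`. -/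
theorem cross_products_determinant_identity (u₁ u₂ u₃ u₄ u₅ u₆ : Fin 3 → ℝ)
    (v₁ v₂ v₃ v₄ v₅ v₆ : Fin 3 → ℝ)
    (hv₁ : v₁ = u₆ ⨯₃ u₁) (hv₂ : v₂ = u₁ ⨯₃ u₂) (hv₃ : v₃ = u₂ ⨯₃ u₃)
    (hv₄ : v₄ = u₃ ⨯₃ u₄) (hv₅ : v₅ = u₄ ⨯₃ u₅) (hv₆ : v₆ = u₅ ⨯₃ u₆)
    (Δ₁ Δ₂ Δ₃ Δ₄ Δ₅ Δ₆ : ℝ)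
    (hΔ₁ : Δ₁ = v₁ ⬝ᵥ (v₂ ⨯₃ v₃))
    (hΔ₂ : Δ₂ = v₂ ⬝ᵥ (v₃ ⨯₃ v₄))
    (hΔ₃ : Δ₃ = v₃ ⬝ᵥ (v₄ ⨯₃ v₅))
    (hΔ₄ : Δ₄ = v₄ ⬝ᵥ (v₅ ⨯₃ v₆))
    (hΔ₅ : Δ₅ = v₅ ⬝ᵥ (v₆ ⨯₃ v₁))
    (hΔ₆ : Δ₆ = v₆ ⬝ᵥ (v₁ ⨯₃ v₂)) :
    Δ₁ * Δ₃ * Δ₅ = Δ₂ * Δ₄ * Δ₆ := by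
  subst hv₁ hv₂ hv₃ hv₄ hv₅ hv₆ hΔ₁ hΔ₂ hΔ₃ hΔ₄ hΔ₅ hΔ₆
  simp only [cross_dot_cross_cross_cross]
  ring
end

section
/- Let v_1,…,v_6 ∈ ℝ³ be the edge vectors of a generic regular closed hexagon with support system u_1,…,u_6, and let w_i = u_{i+1} − u_i (indices mod 6) be the edge vectors of the derived hexagon. Then ⟨w_2,[w_3,w_4]⟩ + ⟨w_3,[w_4,w_5]⟩ + ⟨w_2,[w_3,w_5]⟩ + ⟨w_2,[w_4,w_5]⟩ = 0 and 2·⟨w_1,[w_2,w_3]⟩ + ⟨w_1,[w_2,w_4]⟩ + ⟨w_3,[w_5,w_6]⟩ = 0. -/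
open Matrix

/-!
Closedness of the hexagon says `∑ᵢ vᵢ = 0`, and through the support-system equations
`uᵢ ⨯₃ uᵢ₊₁ = vᵢ₊₁` this is the vanishing of `S = ∑ᵢ uᵢ ⨯₃ uᵢ₊₁`. Expanding the
`wᵢ = uᵢ₊₁ - uᵢ` trilinearly, the left-hand sides of the two relations are exactly the
triple products `(u₆ - u₂) ⬝ᵥ S` and `(u₄ + u₅ - u₁ - u₃) ⬝ᵥ S`, so both vanish.
-/

section HexagonCrossSum

variable {R : Type*} [CommRing R] (u₁ u₂ u₃ u₄ u₅ u₆ : Fin 3 → R)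

def hexagonCrossSum : Fin 3 → R :=
  u₁ ⨯₃ u₂ + u₂ ⨯₃ u₃ + u₃ ⨯₃ u₄ + u₄ ⨯₃ u₅ + u₅ ⨯₃ u₆ + u₆ ⨯₃ u₁

theorem derived_first_relation_eq_dotProduct_hexagonCrossSum :
    (u₃ - u₂) ⬝ᵥ ((u₄ - u₃) ⨯₃ (u₅ - u₄)) + (u₄ - u₃) ⬝ᵥ ((u₅ - u₄) ⨯₃ (u₆ - u₅))
      + (u₃ - u₂) ⬝ᵥ ((u₄ - u₃) ⨯₃ (u₆ - u₅)) + (u₃ - u₂) ⬝ᵥ ((u₅ - u₄) ⨯₃ (u₆ - u₅)) =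
      (u₆ - u₂) ⬝ᵥ hexagonCrossSum u₁ u₂ u₃ u₄ u₅ u₆ := by
  simp only [hexagonCrossSum, cross_apply, vec3_dotProduct, Pi.add_apply, Pi.sub_apply,
    cons_val_zero, cons_val_one, cons_val_two, head_cons, tail_cons]
  ring

theorem derived_second_relation_eq_dotProduct_hexagonCrossSum :
    2 * ((u₂ - u₁) ⬝ᵥ ((u₃ - u₂) ⨯₃ (u₄ - u₃))) + (u₂ - u₁) ⬝ᵥ ((u₃ - u₂) ⨯₃ (u₅ - u₄))
      + (u₄ - u₃) ⬝ᵥ ((u₆ - u₅) ⨯₃ (u₁ - u₆)) =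
      (u₄ + u₅ - u₁ - u₃) ⬝ᵥ hexagonCrossSum u₁ u₂ u₃ u₄ u₅ u₆ := by
  simp only [hexagonCrossSum, cross_apply, vec3_dotProduct, Pi.add_apply, Pi.sub_apply,
    cons_val_zero, cons_val_one, cons_val_two, head_cons, tail_cons]
  ring

end HexagonCrossSum

theorem derived_hexagon_determinant_relations_general (v₁ v₂ v₃ v₄ v₅ v₆ : Fin 3 → ℝ)
    (hclosed : v₁ + v₂ + v₃ + v₄ + v₅ + v₆ = 0)
    (u₁ u₂ u₃ u₄ u₅ u₆ : Fin 3 → ℝ)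
    (h₁₂ : u₁ ⨯₃ u₂ = v₂) (h₂₃ : u₂ ⨯₃ u₃ = v₃) (h₃₄ : u₃ ⨯₃ u₄ = v₄)
    (h₄₅ : u₄ ⨯₃ u₅ = v₅) (h₅₆ : u₅ ⨯₃ u₆ = v₆) (h₆₁ : u₆ ⨯₃ u₁ = v₁)
    (w₁ w₂ w₃ w₄ w₅ w₆ : Fin 3 → ℝ)
    (hw₁ : w₁ = u₂ - u₁) (hw₂ : w₂ = u₃ - u₂) (hw₃ : w₃ = u₄ - u₃)
    (hw₄ : w₄ = u₅ - u₄) (hw₅ : w₅ = u₆ - u₅) (hw₆ : w₆ = u₁ - u₆) :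
    w₂ ⬝ᵥ (w₃ ⨯₃ w₄) + w₃ ⬝ᵥ (w₄ ⨯₃ w₅) + w₂ ⬝ᵥ (w₃ ⨯₃ w₅) + w₂ ⬝ᵥ (w₄ ⨯₃ w₅) = 0 ∧
      2 * (w₁ ⬝ᵥ (w₂ ⨯₃ w₃)) + w₁ ⬝ᵥ (w₂ ⨯₃ w₄) + w₃ ⬝ᵥ (w₅ ⨯₃ w₆) = 0 := by
  have hS : hexagonCrossSum u₁ u₂ u₃ u₄ u₅ u₆ = 0 := by
    rw [hexagonCrossSum, h₁₂, h₂₃, h₃₄, h₄₅, h₅₆, h₆₁, ← hclosed]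
    abel
  subst hw₁ hw₂ hw₃ hw₄ hw₅ hw₆
  rw [derived_first_relation_eq_dotProduct_hexagonCrossSum,
    derived_second_relation_eq_dotProduct_hexagonCrossSum, hS]
  exact ⟨dotProduct_zero _, dotProduct_zero _⟩

/-- Let `v₁, …, v₆` be the edge vectors of a generic regular closed
hexagon with support system `u₁, …, u₆`, and let `wᵢ = u_{i+1} - uᵢ` (indices mod 6) be
the edge vectors of the derived hexagon.  Then
`⟨w₂,[w₃,w₄]⟩ + ⟨w₃,[w₄,w₅]⟩ + ⟨w₂,[w₃,w₅]⟩ + ⟨w₂,[w₄,w₅]⟩ = 0` and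
`2·⟨w₁,[w₂,w₃]⟩ + ⟨w₁,[w₂,w₄]⟩ + ⟨w₃,[w₅,w₆]⟩ = 0`. -/
theorem derived_hexagon_determinant_relations (v₁ v₂ v₃ v₄ v₅ v₆ : Fin 3 → ℝ)
    (hclosed : v₁ + v₂ + v₃ + v₄ + v₅ + v₆ = 0)
    (hΔ₁ : v₁ ⬝ᵥ (v₂ ⨯₃ v₃) ≠ 0)
    (hΔ₂ : v₂ ⬝ᵥ (v₃ ⨯₃ v₄) ≠ 0)
    (hΔ₃ : v₃ ⬝ᵥ (v₄ ⨯₃ v₅) ≠ 0)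
    (hΔ₄ : v₄ ⬝ᵥ (v₅ ⨯₃ v₆) ≠ 0)
    (hΔ₅ : v₅ ⬝ᵥ (v₆ ⨯₃ v₁) ≠ 0)
    (hΔ₆ : v₆ ⬝ᵥ (v₁ ⨯₃ v₂) ≠ 0)
    (u₁ u₂ u₃ u₄ u₅ u₆ : Fin 3 → ℝ)
    (h₁₂ : u₁ ⨯₃ u₂ = v₂) (h₂₃ : u₂ ⨯₃ u₃ = v₃) (h₃₄ : u₃ ⨯₃ u₄ = v₄)
    (h₄₅ : u₄ ⨯₃ u₅ = v₅) (h₅₆ : u₅ ⨯₃ u₆ = v₆) (h₆₁ : u₆ ⨯₃ u₁ = v₁)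
    (w₁ w₂ w₃ w₄ w₅ w₆ : Fin 3 → ℝ)
    (hw₁ : w₁ = u₂ - u₁) (hw₂ : w₂ = u₃ - u₂) (hw₃ : w₃ = u₄ - u₃)
    (hw₄ : w₄ = u₅ - u₄) (hw₅ : w₅ = u₆ - u₅) (hw₆ : w₆ = u₁ - u₆) :
    w₂ ⬝ᵥ (w₃ ⨯₃ w₄) + w₃ ⬝ᵥ (w₄ ⨯₃ w₅) + w₂ ⬝ᵥ (w₃ ⨯₃ w₅) + w₂ ⬝ᵥ (w₄ ⨯₃ w₅) = 0 ∧
      2 * (w₁ ⬝ᵥ (w₂ ⨯₃ w₃)) + w₁ ⬝ᵥ (w₂ ⨯₃ w₄) + w₃ ⬝ᵥ (w₅ ⨯₃ w₆) = 0 :=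
  derived_hexagon_determinant_relations_general v₁ v₂ v₃ v₄ v₅ v₆ hclosed u₁ u₂ u₃ u₄ u₅ u₆ h₁₂ h₂₃
    h₃₄ h₄₅ h₅₆ h₆₁ w₁ w₂ w₃ w₄ w₅ w₆ hw₁ hw₂ hw₃ hw₄ hw₅ hw₆
end

section
/- Let v_1,…,v_6 ∈ ℝ³ be the edge vectors of a generic regular closed hexagon and let u_1,…,u_6 be a support system. Then ⟨u_4 − u_2, [u_3 − u_1, u_5 − u_1]⟩ = 0 and ⟨u_6 − u_2, [u_3 − u_1, u_5 − u_1]⟩ = 0; that is, the vertices u_1, u_3, u_5 of the derived hexagon lie in a plane Π_1 and the vertices u_2, u_4, u_6 lie in a plane Π_2 parallel to Π_1. -/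
open Matrix

/-!
Closedness of the hexagon says that the cyclic sum `∑ [u_i, u_{i+1}]` vanishes, and the triple
product `⟨u₄ - u₂, [u₃ - u₁, u₅ - u₁]⟩` is identically `⟨u₁ - u₅, ∑ [u_i, u_{i+1}]⟩`. Hence `u₂`
and `u₄` lie in a common plane parallel to the plane `Π₁` of `u₁, u₃, u₅`. Relabelling the
hexagon two steps forward leaves both the cyclic sum and `Π₁` unchanged and moves `u₂, u₄` to
`u₄, u₆`, so `u₆` lies in that plane too.
-/

section CommRing

variable {R : Type*} [CommRing R]

theorem sub_cross_sub_eq_sub_cross_sub (a b c : Fin 3 → R) :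
    (b - a) ⨯₃ (c - a) = (c - b) ⨯₃ (a - b) := by
  simp only [map_sub, LinearMap.sub_apply, cross_self]
  rw [← cross_anticomm a c, ← cross_anticomm b c]
  abel

theorem sub_dotProduct_sub_cross_sub_eq (u₁ u₂ u₃ u₄ u₅ u₆ : Fin 3 → R) :
    (u₄ - u₂) ⬝ᵥ ((u₃ - u₁) ⨯₃ (u₅ - u₁)) =
      (u₁ - u₅) ⬝ᵥ (u₁ ⨯₃ u₂ + u₂ ⨯₃ u₃ + u₃ ⨯₃ u₄ + u₄ ⨯₃ u₅ + u₅ ⨯₃ u₆ + u₆ ⨯₃ u₁) := by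
  simp only [cross_apply, dotProduct, Fin.sum_univ_three, Pi.add_apply, Pi.sub_apply,
    cons_val_zero, cons_val_one, cons_val_two, head_cons, tail_cons]
  ring

end CommRing

theorem derived_hexagon_two_parallel_planes_general (v₁ v₂ v₃ v₄ v₅ v₆ : Fin 3 → ℝ)
    (hclosed : v₁ + v₂ + v₃ + v₄ + v₅ + v₆ = 0)
    (u₁ u₂ u₃ u₄ u₅ u₆ : Fin 3 → ℝ)
    (h₁₂ : u₁ ⨯₃ u₂ = v₂) (h₂₃ : u₂ ⨯₃ u₃ = v₃) (h₃₄ : u₃ ⨯₃ u₄ = v₄)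
    (h₄₅ : u₄ ⨯₃ u₅ = v₅) (h₅₆ : u₅ ⨯₃ u₆ = v₆) (h₆₁ : u₆ ⨯₃ u₁ = v₁) :
    (u₄ - u₂) ⬝ᵥ ((u₃ - u₁) ⨯₃ (u₅ - u₁)) = 0 ∧
      (u₆ - u₂) ⬝ᵥ ((u₃ - u₁) ⨯₃ (u₅ - u₁)) = 0 := by
  have hsum : u₁ ⨯₃ u₂ + u₂ ⨯₃ u₃ + u₃ ⨯₃ u₄ + u₄ ⨯₃ u₅ + u₅ ⨯₃ u₆ + u₆ ⨯₃ u₁ = 0 := by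
    rw [h₁₂, h₂₃, h₃₄, h₄₅, h₅₆, h₆₁, ← hclosed]
    abel
  have hsum' : u₃ ⨯₃ u₄ + u₄ ⨯₃ u₅ + u₅ ⨯₃ u₆ + u₆ ⨯₃ u₁ + u₁ ⨯₃ u₂ + u₂ ⨯₃ u₃ = 0 := by
    rw [← hsum]
    abel
  have plane₂₄ : (u₄ - u₂) ⬝ᵥ ((u₃ - u₁) ⨯₃ (u₅ - u₁)) = 0 := by
    rw [sub_dotProduct_sub_cross_sub_eq, hsum, dotProduct_zero]
  have plane₄₆ : (u₆ - u₄) ⬝ᵥ ((u₃ - u₁) ⨯₃ (u₅ - u₁)) = 0 := by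
    rw [sub_cross_sub_eq_sub_cross_sub, sub_dotProduct_sub_cross_sub_eq u₃ u₄ u₅ u₆ u₁ u₂,
      hsum', dotProduct_zero]
  refine ⟨plane₂₄, ?_⟩
  rw [← sub_add_sub_cancel u₆ u₄ u₂, add_dotProduct, plane₄₆, plane₂₄, add_zero]

/-- Let `v₁, …, v₆` be the edge vectors of a generic regular closed
hexagon with support system `u₁, …, u₆`.  Then
`⟨u₄ - u₂, [u₃ - u₁, u₅ - u₁]⟩ = 0` and `⟨u₆ - u₂, [u₃ - u₁, u₅ - u₁]⟩ = 0`: the vertices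
`u₁, u₃, u₅` of the derived hexagon lie in a plane `Π₁` and the vertices `u₂, u₄, u₆` lie
in a plane `Π₂` parallel to `Π₁`. -/
theorem derived_hexagon_two_parallel_planes (v₁ v₂ v₃ v₄ v₅ v₆ : Fin 3 → ℝ)
    (hclosed : v₁ + v₂ + v₃ + v₄ + v₅ + v₆ = 0)
    (hΔ₁ : v₁ ⬝ᵥ (v₂ ⨯₃ v₃) ≠ 0)
    (hΔ₂ : v₂ ⬝ᵥ (v₃ ⨯₃ v₄) ≠ 0)
    (hΔ₃ : v₃ ⬝ᵥ (v₄ ⨯₃ v₅) ≠ 0)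
    (hΔ₄ : v₄ ⬝ᵥ (v₅ ⨯₃ v₆) ≠ 0)
    (hΔ₅ : v₅ ⬝ᵥ (v₆ ⨯₃ v₁) ≠ 0)
    (hΔ₆ : v₆ ⬝ᵥ (v₁ ⨯₃ v₂) ≠ 0)
    (u₁ u₂ u₃ u₄ u₅ u₆ : Fin 3 → ℝ)
    (h₁₂ : u₁ ⨯₃ u₂ = v₂) (h₂₃ : u₂ ⨯₃ u₃ = v₃) (h₃₄ : u₃ ⨯₃ u₄ = v₄)
    (h₄₅ : u₄ ⨯₃ u₅ = v₅) (h₅₆ : u₅ ⨯₃ u₆ = v₆) (h₆₁ : u₆ ⨯₃ u₁ = v₁) :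
    (u₄ - u₂) ⬝ᵥ ((u₃ - u₁) ⨯₃ (u₅ - u₁)) = 0 ∧
      (u₆ - u₂) ⬝ᵥ ((u₃ - u₁) ⨯₃ (u₅ - u₁)) = 0 :=
  derived_hexagon_two_parallel_planes_general v₁ v₂ v₃ v₄ v₅ v₆ hclosed u₁ u₂ u₃ u₄ u₅ u₆ h₁₂ h₂₃
    h₃₄ h₄₅ h₅₆ h₆₁
end
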